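/- arXiv:2101.05800 — 7 statements merged into one kernel-verified Lean document; each statement's English description precedes it below -/
import Mathlib

section
/- For all real numbers v ≥ 0 and a > 0, the identity ∫_{a}^{∞} e^{−v t} / (t · √(2π (t − a))) dt = ∫_{√(2v)}^{∞} e^{−a t²/2} dt holds (both sides being finite Lebesgue integrals). -/
open MeasureTheory Real


-- L1: exponential integral on Ioi
lemma aux_exp_integral {b : ℝ} (hb : 0 < b) (c : ℝ) :
    ∫ x in Set.Ioi c, Real.exp (-(b * x)) = Real.exp (-(b * c)) / b := by
  have h := integral_comp_mul_left_Ioi (fun x => Real.exp (-x)) c hb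
  rw [integral_exp_neg_Ioi] at h
  rw [h, smul_eq_mul, div_eq_inv_mul]

lemma aux_exp_integrable {b : ℝ} (hb : 0 < b) (c : ℝ) :
    IntegrableOn (fun x => Real.exp (-(b * x))) (Set.Ioi c) := by
  simpa [neg_mul] using exp_neg_integrableOn_Ioi c hb

-- L2: lintegral shift
lemma aux_lintegral_shift (F : ℝ → ENNReal) (a : ℝ) :
    ∫⁻ t in Set.Ioi a, F t = ∫⁻ s in Set.Ioi (0:ℝ), F (s + a) := by
  have h := (measurePreserving_add_right (volume : Measure ℝ) a).setLIntegral_comp_preimage_emb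
      (measurableEmbedding_addRight a) F (Set.Ioi a)
  have hpre : (fun x => x + a) ⁻¹' Set.Ioi a = Set.Ioi (0:ℝ) := by
    ext x; simp
  rw [hpre] at h
  exact h.symm

-- L3: Gamma(1/2) integral
lemma aux_gamma_half {r : ℝ} (hr : 0 < r) :
    ∫ s in Set.Ioi (0:ℝ), s ^ (-(1/2) : ℝ) * Real.exp (-(r * s)) =
      Real.sqrt π / Real.sqrt r := by
  have h := integral_rpow_mul_exp_neg_mul_Ioi (by norm_num : (0:ℝ) < 1/2) hr
  norm_num at h
  rw [h, ← Real.sqrt_eq_rpow, Real.Gamma_one_half_eq, Real.sqrt_inv]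
  field_simp

lemma aux_gamma_half_integrable {r : ℝ} (hr : 0 < r) :
    IntegrableOn (fun s : ℝ => s ^ (-(1/2) : ℝ) * Real.exp (-(r * s))) (Set.Ioi (0:ℝ)) := by
  have h := integrableOn_rpow_mul_exp_neg_mul_rpow
    (by norm_num : (-1:ℝ) < -(1/2)) (zero_lt_one' ℝ) hr
  refine h.congr_fun (fun x hx => ?_) measurableSet_Ioi
  simp only [Real.rpow_one, neg_mul]

-- Step A
lemma aux_stepA {v a : ℝ} (hv : 0 ≤ v) (ha : 0 < a) {t : ℝ} (ht : t ∈ Set.Ioi a) :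
    ENNReal.ofReal (Real.exp (-v * t) / (t * Real.sqrt (2 * π * (t - a)))) =
    ∫⁻ r in Set.Ioi v, ENNReal.ofReal (Real.exp (-r * t) / Real.sqrt (2 * π * (t - a))) := by
  have ht0 : 0 < t := ha.trans ht
  set c := Real.sqrt (2 * π * (t - a)) with hc
  have hc0 : 0 ≤ c := Real.sqrt_nonneg _
  have hint : IntegrableOn (fun r : ℝ => Real.exp (-r * t) / c) (Set.Ioi v) := by
    have h0 : IntegrableOn (fun x : ℝ => Real.exp (-(t * x)) / c) (Set.Ioi v) :=
      (aux_exp_integrable ht0 v).div_const c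
    exact h0.congr_fun (fun r _ => by ring_nf) measurableSet_Ioi
  have hnn : 0 ≤ᵐ[volume.restrict (Set.Ioi v)] fun r : ℝ => Real.exp (-r * t) / c :=
    ae_of_all _ fun r => by positivity
  rw [← ofReal_integral_eq_lintegral_ofReal hint hnn]
  congr 1
  rw [integral_div]
  have h1 : ∫ r in Set.Ioi v, Real.exp (-r * t) = Real.exp (-(t * v)) / t := by
    rw [← aux_exp_integral ht0 v]
    refine setIntegral_congr_fun measurableSet_Ioi (fun r _ => ?_)
    ring_nf
  rw [h1, div_div, mul_comm t v]
  ring_nf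

-- Step C
lemma aux_stepC {a : ℝ} (ha : 0 < a) {r : ℝ} (hr : 0 < r) :
    ∫⁻ t in Set.Ioi a, ENNReal.ofReal (Real.exp (-r * t) / Real.sqrt (2 * π * (t - a))) =
      ENNReal.ofReal (Real.exp (-r * a) / Real.sqrt (2 * r)) := by
  have hπ : (0:ℝ) < π := Real.pi_pos
  have hint : IntegrableOn (fun s : ℝ => (Real.exp (-r * a) / Real.sqrt (2 * π)) *
      (s ^ (-(1/2) : ℝ) * Real.exp (-(r * s)))) (Set.Ioi (0:ℝ)) :=
    (aux_gamma_half_integrable hr).const_mul _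
  have hnn : 0 ≤ᵐ[volume.restrict (Set.Ioi (0:ℝ))] fun s : ℝ =>
      (Real.exp (-r * a) / Real.sqrt (2 * π)) * (s ^ (-(1/2) : ℝ) * Real.exp (-(r * s))) := by
    refine (ae_restrict_iff' measurableSet_Ioi).2 (ae_of_all _ fun s hs => ?_)
    have hs0 : (0:ℝ) < s := hs
    positivity
  calc ∫⁻ t in Set.Ioi a, ENNReal.ofReal (Real.exp (-r * t) / Real.sqrt (2 * π * (t - a)))
      = ∫⁻ s in Set.Ioi (0:ℝ),
          ENNReal.ofReal (Real.exp (-r * (s + a)) / Real.sqrt (2 * π * (s + a - a))) :=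
        aux_lintegral_shift (fun t => ENNReal.ofReal (Real.exp (-r * t) / Real.sqrt (2 * π * (t - a)))) a
    _ = ∫⁻ s in Set.Ioi (0:ℝ), ENNReal.ofReal ((Real.exp (-r * a) / Real.sqrt (2 * π)) *
          (s ^ (-(1/2) : ℝ) * Real.exp (-(r * s)))) := by
        refine setLIntegral_congr_fun measurableSet_Ioi (fun s hs => ?_)
        have hs0 : (0:ℝ) < s := hs
        congr 1
        rw [show s + a - a = s by ring, Real.sqrt_mul (by positivity) s,
          Real.rpow_neg hs0.le, ← Real.sqrt_eq_rpow,
          show -r * (s + a) = -(r * s) + -r * a by ring, Real.exp_add]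
        have h1 : Real.sqrt s ≠ 0 := ne_of_gt (Real.sqrt_pos.mpr hs0)
        have h2 : Real.sqrt (2 * π) ≠ 0 := ne_of_gt (Real.sqrt_pos.mpr (by positivity))
        field_simp
    _ = ENNReal.ofReal (∫ s in Set.Ioi (0:ℝ), (Real.exp (-r * a) / Real.sqrt (2 * π)) *
          (s ^ (-(1/2) : ℝ) * Real.exp (-(r * s)))) :=
        (ofReal_integral_eq_lintegral_ofReal hint hnn).symm
    _ = ENNReal.ofReal (Real.exp (-r * a) / Real.sqrt (2 * r)) := by
        congr 1
        rw [integral_const_mul, aux_gamma_half hr,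
          Real.sqrt_mul (by norm_num : (0:ℝ) ≤ 2) π, Real.sqrt_mul (by norm_num : (0:ℝ) ≤ 2) r]
        have h1 : Real.sqrt π ≠ 0 := ne_of_gt (Real.sqrt_pos.mpr hπ)
        have h2 : Real.sqrt r ≠ 0 := ne_of_gt (Real.sqrt_pos.mpr hr)
        have h3 : Real.sqrt 2 ≠ 0 := by norm_num [Real.sqrt_eq_zero']
        field_simp

lemma aux_image {v : ℝ} (hv : 0 ≤ v) :
    (fun w : ℝ => w ^ 2 / 2) '' Set.Ioi (Real.sqrt (2 * v)) = Set.Ioi v := by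
  ext r
  simp only [Set.mem_image, Set.mem_Ioi]
  constructor
  · rintro ⟨w, hw, rfl⟩
    have h1 := Real.sq_sqrt (by linarith : (0:ℝ) ≤ 2 * v)
    nlinarith [Real.sqrt_nonneg (2 * v)]
  · intro hr
    refine ⟨Real.sqrt (2 * r), Real.sqrt_lt_sqrt (by linarith) (by linarith), ?_⟩
    rw [Real.sq_sqrt (by linarith : (0:ℝ) ≤ 2 * r)]
    ring

lemma aux_subst {v a : ℝ} (hv : 0 ≤ v) (ha : 0 < a) :
    ∫ r in Set.Ioi v, Real.exp (-r * a) / Real.sqrt (2 * r) =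
      ∫ t in Set.Ioi (Real.sqrt (2 * v)), Real.exp (-a * t ^ 2 / 2) := by
  have hd : ∀ x ∈ Set.Ioi (Real.sqrt (2 * v)),
      HasDerivWithinAt (fun w : ℝ => w ^ 2 / 2) x (Set.Ioi (Real.sqrt (2 * v))) x := by
    intro x _
    have h : HasDerivAt (fun w : ℝ => w ^ 2 / 2) (↑2 * x ^ 1 / 2) x :=
      (hasDerivAt_pow 2 x).div_const 2
    simpa using h.hasDerivWithinAt
  have hinj : Set.InjOn (fun w : ℝ => w ^ 2 / 2) (Set.Ioi (Real.sqrt (2 * v))) := by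
    intro x hx y hy hxy
    have hx0 : 0 < x := lt_of_le_of_lt (Real.sqrt_nonneg _) hx
    have hy0 : 0 < y := lt_of_le_of_lt (Real.sqrt_nonneg _) hy
    simp only at hxy
    nlinarith
  have h := integral_image_eq_integral_abs_deriv_smul measurableSet_Ioi hd hinj
      (fun r => Real.exp (-r * a) / Real.sqrt (2 * r))
  rw [aux_image hv] at h
  rw [h]
  refine setIntegral_congr_fun measurableSet_Ioi (fun x hx => ?_)
  have hx0 : 0 < x := lt_of_le_of_lt (Real.sqrt_nonneg _) hx
  rw [smul_eq_mul, abs_of_pos hx0, show (2:ℝ) * (x ^ 2 / 2) = x ^ 2 by ring,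
    Real.sqrt_sq hx0.le, show -(x ^ 2 / 2) * a = -a * x ^ 2 / 2 by ring]
  field_simp

theorem laplace_identity' (v a : ℝ) (hv : 0 ≤ v) (ha : 0 < a) :
    ∫ t in Set.Ioi a, Real.exp (-v * t) / (t * Real.sqrt (2 * π * (t - a))) =
      ∫ t in Set.Ioi (Real.sqrt (2 * v)), Real.exp (-a * t ^ 2 / 2) := by
  have hL : ∫ t in Set.Ioi a, Real.exp (-v * t) / (t * Real.sqrt (2 * π * (t - a)))
      = (∫⁻ t in Set.Ioi a,
          ENNReal.ofReal (Real.exp (-v * t) / (t * Real.sqrt (2 * π * (t - a))))).toReal := by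
    apply integral_eq_lintegral_of_nonneg_ae
    · refine (ae_restrict_iff' measurableSet_Ioi).2 (ae_of_all _ fun t ht => ?_)
      have ht0 : 0 < t := ha.trans ht
      positivity
    · apply Measurable.aestronglyMeasurable
      fun_prop
  have hM : ∫ r in Set.Ioi v, Real.exp (-r * a) / Real.sqrt (2 * r)
      = (∫⁻ r in Set.Ioi v, ENNReal.ofReal (Real.exp (-r * a) / Real.sqrt (2 * r))).toReal := by
    apply integral_eq_lintegral_of_nonneg_ae
    · exact ae_of_all _ fun r => by positivity
    · apply Measurable.aestronglyMeasurable
      fun_prop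
  have hmeas : AEMeasurable
      (fun p : ℝ × ℝ => ENNReal.ofReal (Real.exp (-p.2 * p.1) / Real.sqrt (2 * π * (p.1 - a))))
      ((volume.restrict (Set.Ioi a)).prod (volume.restrict (Set.Ioi v))) := by
    apply Measurable.aemeasurable
    fun_prop
  have key : ∫⁻ t in Set.Ioi a,
        ENNReal.ofReal (Real.exp (-v * t) / (t * Real.sqrt (2 * π * (t - a))))
      = ∫⁻ r in Set.Ioi v, ENNReal.ofReal (Real.exp (-r * a) / Real.sqrt (2 * r)) := by
    calc ∫⁻ t in Set.Ioi a,
          ENNReal.ofReal (Real.exp (-v * t) / (t * Real.sqrt (2 * π * (t - a))))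
        = ∫⁻ t in Set.Ioi a, ∫⁻ r in Set.Ioi v,
            ENNReal.ofReal (Real.exp (-r * t) / Real.sqrt (2 * π * (t - a))) :=
          setLIntegral_congr_fun measurableSet_Ioi (fun t ht => aux_stepA hv ha ht)
      _ = ∫⁻ r in Set.Ioi v, ∫⁻ t in Set.Ioi a,
            ENNReal.ofReal (Real.exp (-r * t) / Real.sqrt (2 * π * (t - a))) :=
          lintegral_lintegral_swap hmeas
      _ = ∫⁻ r in Set.Ioi v, ENNReal.ofReal (Real.exp (-r * a) / Real.sqrt (2 * r)) :=
          setLIntegral_congr_fun measurableSet_Ioi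
            (fun r hr => aux_stepC ha (lt_of_le_of_lt hv hr))
  rw [hL, key, ← hM, aux_subst hv ha]

/-- Equation (5.2) of the paper: for `v ≥ 0` and `a > 0`,
`∫_{a}^{∞} e^{−v t} / (t √(2π (t − a))) dt = ∫_{√(2v)}^{∞} e^{−a t²/2} dt`. -/
theorem laplace_identity (v a : ℝ) (hv : 0 ≤ v) (ha : 0 < a) :
    ∫ t in Set.Ioi a, Real.exp (-v * t) / (t * Real.sqrt (2 * π * (t - a))) =
      ∫ t in Set.Ioi (Real.sqrt (2 * v)), Real.exp (-a * t ^ 2 / 2) := by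
  exact laplace_identity' v a hv ha
end

section
/- For every real number a > 0, ∫_{a}^{∞} 1/(t · √(2π (t − a))) dt = √(π/(2a)). -/
open MeasureTheory Real

/-- The `v = 0` case in the proof of the Laplace-transform identity (5.2):
for `a > 0`, `∫_{a}^{∞} 1/(t √(2π (t - a))) dt = √(π/(2a))`. -/
theorem integral_one_div_sqrt (a : ℝ) (ha : 0 < a) :
    ∫ t in Set.Ioi a, 1 / (t * Real.sqrt (2 * π * (t - a))) = Real.sqrt (π / (2 * a)) := by
  have himg : (fun u : ℝ => a + a * u ^ 2) '' Set.Ioi 0 = Set.Ioi a := by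
    ext t
    constructor
    · rintro ⟨u, hu, rfl⟩
      have : 0 < a * u ^ 2 := mul_pos ha (pow_pos hu 2)
      simp [this]
    · intro ht
      refine ⟨Real.sqrt ((t - a) / a), ?_, ?_⟩
      · exact Real.sqrt_pos.mpr (div_pos (sub_pos.mpr ht) ha)
      · have h1 : (0:ℝ) ≤ (t - a) / a :=
          le_of_lt (div_pos (sub_pos.mpr ht) ha)
        simp only
        rw [sq_sqrt h1]
        field_simp
        ring
  have hderiv : ∀ u ∈ Set.Ioi (0:ℝ),
      HasDerivWithinAt (fun u : ℝ => a + a * u ^ 2) (2 * a * u) (Set.Ioi 0) u := by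
    intro u hu
    have : HasDerivAt (fun u : ℝ => a + a * u ^ 2) (a * (2 * u)) u := by
      simpa using ((hasDerivAt_pow 2 u).const_mul a).const_add a
    exact (this.congr_deriv (by ring)).hasDerivWithinAt
  have hinj : Set.InjOn (fun u : ℝ => a + a * u ^ 2) (Set.Ioi 0) := by
    intro x hx y hy h
    simp only at h
    have hx0 : (0:ℝ) < x := hx
    have hy0 : (0:ℝ) < y := hy
    have hxy : x ^ 2 = y ^ 2 := mul_left_cancel₀ ha.ne' (by linarith)
    nlinarith [hxy, mul_pos hx0 hy0]
  have key := integral_image_eq_integral_abs_deriv_smul measurableSet_Ioi hderiv hinj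
    (fun t => 1 / (t * Real.sqrt (2 * π * (t - a))))
  rw [himg] at key
  rw [key]
  have hcongr : ∀ u ∈ Set.Ioi (0:ℝ),
      |2 * a * u| • (1 / ((a + a * u ^ 2) * Real.sqrt (2 * π * (a + a * u ^ 2 - a))))
        = (2 / Real.sqrt (2 * π * a)) * (1 + u ^ 2)⁻¹ := by
    intro u hu
    have hu0 : (0:ℝ) < u := hu
    have h2a : (0:ℝ) < 2 * a * u := by positivity
    have hsq : Real.sqrt (2 * π * (a + a * u ^ 2 - a)) = Real.sqrt (2 * π * a) * u := by
      have : 2 * π * (a + a * u ^ 2 - a) = (2 * π * a) * u ^ 2 := by ring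
      rw [this, Real.sqrt_mul (by positivity), Real.sqrt_sq hu0.le]
    rw [abs_of_pos h2a, hsq, smul_eq_mul]
    have h1u : (0:ℝ) < 1 + u ^ 2 := by positivity
    have hs : (0:ℝ) < Real.sqrt (2 * π * a) := Real.sqrt_pos.mpr (by positivity)
    field_simp
  rw [setIntegral_congr_fun measurableSet_Ioi hcongr, integral_const_mul,
    integral_Ioi_inv_one_add_sq]
  rw [Real.arctan_zero, sub_zero]
  rw [show Real.sqrt (π / (2 * a)) = Real.sqrt (π ^ 2 / (2 * π * a)) by
    congr 1
    field_simp]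
  rw [Real.sqrt_div (by positivity) _, Real.sqrt_sq pi_pos.le]
  field_simp
end

section
/- For every real g > 0, every h ∈ ℝ and every u ≥ 0, the Laplace transform of ρ_h satisfies ∫_ℝ ρ_h(t) e^{−u t} dt = N(0,g)([√(2u + h²), ∞)); that is, it equals the probability that a centered Gaussian random variable with variance g is at least √(2u + h²). -/
open MeasureTheory Real ProbabilityTheory Set

set_option maxHeartbeats 1000000


lemma lap_aux_exp_int {r : ℝ} (hr : 0 < r) (c : ℝ) :
    ∫ b in Ioi c, Real.exp (-(r * b)) = Real.exp (-(r * c)) / r := by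
  have h := integral_comp_mul_left_Ioi (fun x => Real.exp (-x)) c hr
  simp only [smul_eq_mul] at h
  calc ∫ b in Ioi c, Real.exp (-(r * b)) = r⁻¹ * ∫ x in Ioi (r * c), Real.exp (-x) := h
  _ = Real.exp (-(r * c)) / r := by rw [integral_exp_neg_Ioi]; ring

lemma lap_aux_gamma_int {r : ℝ} (hr : 0 < r) :
    ∫ w in Ioi (0:ℝ), Real.exp (-(r * w)) / Real.sqrt w = Real.sqrt π / Real.sqrt r := by
  have h := Real.integral_rpow_mul_exp_neg_mul_Ioi (a := (1:ℝ)/2) one_half_pos hr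
  rw [Real.Gamma_one_half_eq] at h
  have e1 : ∀ w ∈ Ioi (0:ℝ), Real.exp (-(r * w)) / Real.sqrt w
      = w ^ ((1:ℝ)/2 - 1) * Real.exp (-(r * w)) := by
    intro w hw
    rw [show ((1:ℝ)/2 - 1) = -(1/2) by norm_num, Real.rpow_neg (le_of_lt hw),
      ← Real.sqrt_eq_rpow]
    ring
  rw [setIntegral_congr_fun measurableSet_Ioi e1, h, ← Real.sqrt_eq_rpow, one_div,
    Real.sqrt_inv]
  ring

lemma lap_aux_gamma_integrable {r : ℝ} (hr : 0 < r) :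
    IntegrableOn (fun w => Real.exp (-(r * w)) / Real.sqrt w) (Ioi (0:ℝ)) := by
  have h : IntegrableOn (fun x : ℝ => Real.exp (-x) * x ^ ((1:ℝ)/2 - 1)) (Ioi 0) :=
    Real.GammaIntegral_convergent one_half_pos
  have h2 : IntegrableOn (fun x => Real.exp (-(r * x)) * (r * x) ^ ((1:ℝ)/2 - 1)) (Ioi 0) := by
    have := (integrableOn_Ioi_comp_mul_left_iff
      (fun x => Real.exp (-x) * x ^ ((1:ℝ)/2 - 1)) 0 hr).mpr (by rwa [mul_zero])
    exact this
  refine IntegrableOn.congr_fun (f := fun x => Real.sqrt r * (Real.exp (-(r * x)) * (r * x) ^ ((1:ℝ)/2 - 1))) (Integrable.const_mul h2 (Real.sqrt r)) ?_ measurableSet_Ioi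
  intro w hw
  have hw' : (0:ℝ) < w := hw
  have hrw : (r * w) ^ ((1:ℝ)/2 - 1) = (Real.sqrt r)⁻¹ * (Real.sqrt w)⁻¹ := by
    rw [show ((1:ℝ)/2 - 1) = -(1/2) by norm_num, Real.rpow_neg (by positivity),
      Real.mul_rpow hr.le hw'.le, ← Real.sqrt_eq_rpow, ← Real.sqrt_eq_rpow, mul_inv]
  have h1 : Real.sqrt r ≠ 0 := by positivity
  have h2' : Real.sqrt w ≠ 0 := by positivity
  simp only []
  show Real.sqrt r * (Real.exp (-(r * w)) * (r * w) ^ ((1:ℝ)/2 - 1)) = Real.exp (-(r * w)) / Real.sqrt w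
  rw [hrw]
  field_simp

lemma lap_sq_image {a : ℝ} (ha : 0 ≤ a) : (fun x : ℝ => x ^ 2) '' Ioi a = Ioi (a ^ 2) := by
  ext b
  simp only [mem_image, mem_Ioi]
  constructor
  · rintro ⟨x, hx, rfl⟩
    exact pow_lt_pow_left₀ hx ha two_ne_zero
  · intro hb
    have hb0 : 0 ≤ b := le_trans (by positivity) hb.le
    exact ⟨Real.sqrt b, (Real.lt_sqrt ha).mpr hb, Real.sq_sqrt hb0⟩

lemma lap_shift_image (c : ℝ) : (fun w : ℝ => w + c) '' Ioi 0 = Ioi c := by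
  rw [Set.image_add_const_Ioi, zero_add]

lemma lap_sq_inj {a : ℝ} (ha : 0 ≤ a) : InjOn (fun x : ℝ => x ^ 2) (Ioi a) := by
  intro x hx y hy hxy
  have hx' : 0 ≤ x := le_trans ha (le_of_lt hx)
  have hy' : 0 ≤ y := le_trans ha (le_of_lt hy)
  have hxy' : x ^ 2 = y ^ 2 := hxy
  nlinarith [sq_nonneg (x - y), sq_nonneg (x + y)]


lemma lap_e1 {g : ℝ} (hg : 0 < g) {b : ℝ} (hb : 0 < b) : ∀ w ∈ Ioi (0:ℝ),
    |(1:ℝ)| • (Real.exp (-((w + g⁻¹) / 2) * b) / (4 * π * Real.sqrt (g * (w + g⁻¹ - g⁻¹))))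
    = (Real.exp (-b / (2 * g)) / (4 * π * Real.sqrt g)) * (Real.exp (-(b / 2 * w)) / Real.sqrt w) := by
  intro w hw
  have hw' : (0:ℝ) < w := hw
  rw [abs_one, one_smul, add_sub_cancel_right, Real.sqrt_mul hg.le,
    show -((w + g⁻¹) / 2) * b = -b / (2 * g) + -(b / 2 * w) by field_simp; ring,
    Real.exp_add]
  have h1 : Real.sqrt g ≠ 0 := by positivity
  have h2 : Real.sqrt w ≠ 0 := by positivity
  field_simp

-- value of the inner t-integral
lemma lap_inner_t {g : ℝ} (hg : 0 < g) {b : ℝ} (hb : 0 < b) :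
    ∫ t in Ioi g⁻¹, Real.exp (-(t / 2) * b) / (4 * π * Real.sqrt (g * (t - g⁻¹)))
      = (Real.sqrt (2 * π * g))⁻¹ * Real.exp (-b / (2 * g)) / (2 * Real.sqrt b) := by
  have himg := lap_shift_image g⁻¹
  have hderiv : ∀ w ∈ Ioi (0:ℝ),
      HasDerivWithinAt (fun w : ℝ => w + g⁻¹) ((fun _ : ℝ => (1:ℝ)) w) (Ioi 0) w :=
    fun w _ => ((hasDerivAt_id w).add_const g⁻¹).hasDerivWithinAt
  have hinj : InjOn (fun w : ℝ => w + g⁻¹) (Ioi 0) := fun x _ y _ hxy => by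
    simpa using hxy
  have key := integral_image_eq_integral_abs_deriv_smul measurableSet_Ioi hderiv hinj
    (fun t => Real.exp (-(t / 2) * b) / (4 * π * Real.sqrt (g * (t - g⁻¹))))
  rw [himg] at key
  rw [key]
  have e1 := lap_e1 hg hb
  rw [setIntegral_congr_fun measurableSet_Ioi e1, integral_const_mul,
    lap_aux_gamma_int (by positivity : (0:ℝ) < b / 2)]
  have h1 : Real.sqrt g ≠ 0 := by positivity
  have h2 : Real.sqrt b ≠ 0 := by positivity
  have hπ : Real.sqrt π ≠ 0 := by positivity
  have h22 : Real.sqrt 2 * Real.sqrt 2 = 2 := Real.mul_self_sqrt (by norm_num)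
  have hππ : Real.sqrt π * Real.sqrt π = π := Real.mul_self_sqrt pi_pos.le
  have h2' : Real.sqrt 2 ≠ 0 := by positivity
  have e2 : Real.sqrt (2 * π * g) = Real.sqrt 2 * Real.sqrt π * Real.sqrt g := by
    rw [Real.sqrt_mul (by positivity), Real.sqrt_mul (by norm_num : (0:ℝ) ≤ 2)]
  have e3 : Real.sqrt (b / 2) = Real.sqrt b / Real.sqrt 2 := by
    rw [Real.sqrt_div hb.le]
  rw [e2, e3]
  field_simp
  ring_nf
  rw [sq_sqrt pi_pos.le, sq_sqrt (by norm_num : (0:ℝ) ≤ 2)]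
  ring
lemma lap_inner_t_integrable {g : ℝ} (hg : 0 < g) {b : ℝ} (hb : 0 < b) :
    IntegrableOn (fun t => Real.exp (-(t / 2) * b) / (4 * π * Real.sqrt (g * (t - g⁻¹))))
      (Ioi g⁻¹) := by
  have hderiv : ∀ w ∈ Ioi (0:ℝ),
      HasDerivWithinAt (fun w : ℝ => w + g⁻¹) ((fun _ : ℝ => (1:ℝ)) w) (Ioi 0) w :=
    fun w _ => ((hasDerivAt_id w).add_const g⁻¹).hasDerivWithinAt
  have hinj : InjOn (fun w : ℝ => w + g⁻¹) (Ioi 0) := fun x _ y _ hxy => by simpa using hxy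
  rw [← lap_shift_image g⁻¹,
    integrableOn_image_iff_integrableOn_abs_deriv_smul measurableSet_Ioi hderiv hinj]
  refine IntegrableOn.congr_fun
    (f := fun w => (Real.exp (-b / (2 * g)) / (4 * π * Real.sqrt g)) *
      (Real.exp (-(b / 2 * w)) / Real.sqrt w))
    (Integrable.const_mul (lap_aux_gamma_integrable (half_pos hb)) _) ?_ measurableSet_Ioi
  intro w hw
  exact (lap_e1 hg hb w hw).symm

lemma lap_G_eq {g : ℝ} (hg : 0 < g) {a : ℝ} (ha : 0 ≤ a) :
    ∫ b in Ioi (a ^ 2), (Real.sqrt (2 * π * g))⁻¹ * Real.exp (-b / (2 * g)) / (2 * Real.sqrt b)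
      = ∫ x in Ioi a, (Real.sqrt (2 * π * g))⁻¹ * Real.exp (-x ^ 2 / (2 * g)) := by
  have hderiv : ∀ x ∈ Ioi a,
      HasDerivWithinAt (fun x : ℝ => x ^ 2) ((fun x : ℝ => 2 * x) x) (Ioi a) x := by
    intro x _
    simpa using (hasDerivAt_pow 2 x).hasDerivWithinAt
  rw [← lap_sq_image ha, integral_image_eq_integral_abs_deriv_smul measurableSet_Ioi hderiv
    (lap_sq_inj ha)]
  refine setIntegral_congr_fun measurableSet_Ioi fun x hx => ?_
  have hx0 : 0 < x := lt_of_le_of_lt ha hx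
  rw [smul_eq_mul, Real.sqrt_sq hx0.le, abs_of_pos (by positivity : (0:ℝ) < 2 * x)]
  field_simp

set_option maxHeartbeats 1000000 in
lemma lap_G_integrable {g : ℝ} (hg : 0 < g) {a : ℝ} (ha : 0 ≤ a) :
    IntegrableOn
      (fun b => (Real.sqrt (2 * π * g))⁻¹ * Real.exp (-b / (2 * g)) / (2 * Real.sqrt b))
      (Ioi (a ^ 2)) := by
  have hderiv : ∀ x ∈ Ioi a,
      HasDerivWithinAt (fun x : ℝ => x ^ 2) ((fun x : ℝ => 2 * x) x) (Ioi a) x := by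
    intro x _
    simpa using (hasDerivAt_pow 2 x).hasDerivWithinAt
  rw [← lap_sq_image ha, integrableOn_image_iff_integrableOn_abs_deriv_smul measurableSet_Ioi
    hderiv (lap_sq_inj ha)]
  refine IntegrableOn.congr_fun
    (f := fun x => (Real.sqrt (2 * π * g))⁻¹ * Real.exp (-(2 * g)⁻¹ * x ^ 2))
    (Integrable.integrableOn
      (Integrable.const_mul (integrable_exp_neg_mul_sq (b := (2 * g)⁻¹) (by positivity)) _))
    ?_ measurableSet_Ioi
  intro x hx
  have hx0 : 0 < x := lt_of_le_of_lt ha hx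
  have h1 : -(2 * g)⁻¹ * x ^ 2 = -x ^ 2 / (2 * g) := by field_simp
  simp only [h1, smul_eq_mul, Real.sqrt_sq hx0.le, abs_of_pos (by positivity : (0:ℝ) < 2 * x)]
  field_simp

/-- Lemma 5.2 of the paper: for `g > 0`, `h ∈ ℝ` and `u ≥ 0`, the Laplace transform of the
density `ρ_h` satisfies `∫_ℝ ρ_h(t) e^{−u t} dt = N(0,g)([√(2u + h²), ∞))`, where
`ρ_h(t) = exp(−h² t/2)/(2π t √(g (t − g⁻¹)))` for `t > g⁻¹` and `ρ_h(t) = 0` otherwise. -/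


theorem laplace_transform_density (g h : ℝ) (hg : 0 < g) (u : ℝ) (hu : 0 ≤ u) :
    (∫ t : ℝ,
        (if g⁻¹ < t then Real.exp (-(h ^ 2) * t / 2) / (2 * π * t * Real.sqrt (g * (t - g⁻¹)))
          else 0) * Real.exp (-u * t)) =
      (gaussianReal 0 g.toNNReal (Set.Ici (Real.sqrt (2 * u + h ^ 2)))).toReal := by
  have hginv : 0 < g⁻¹ := inv_pos.mpr hg
  set a : ℝ := Real.sqrt (2 * u + h ^ 2) with ha_def
  have ha0 : 0 ≤ a := Real.sqrt_nonneg _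
  have ha2 : a ^ 2 = 2 * u + h ^ 2 := Real.sq_sqrt (by positivity)
  set F : ℝ → ℝ → ℝ :=
    fun b t => Real.exp (-(t / 2) * b) / (4 * π * Real.sqrt (g * (t - g⁻¹))) with hF_def
  set G : ℝ → ℝ :=
    fun b => (Real.sqrt (2 * π * g))⁻¹ * Real.exp (-b / (2 * g)) / (2 * Real.sqrt b) with hG_def
  -- Step 1: the integral as a set integral of the inner b-integral
  have hind : (fun t : ℝ =>
      (if g⁻¹ < t then Real.exp (-(h ^ 2) * t / 2) / (2 * π * t * Real.sqrt (g * (t - g⁻¹)))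
        else 0) * Real.exp (-u * t))
      = (Ioi g⁻¹).indicator (fun t =>
          Real.exp (-(h ^ 2) * t / 2) / (2 * π * t * Real.sqrt (g * (t - g⁻¹)))
            * Real.exp (-u * t)) := by
    funext t
    by_cases h' : g⁻¹ < t <;> simp [Set.indicator_apply, h']
  have step1b : ∀ t ∈ Ioi g⁻¹,
      Real.exp (-(h ^ 2) * t / 2) / (2 * π * t * Real.sqrt (g * (t - g⁻¹))) * Real.exp (-u * t)
        = ∫ b in Ioi (a ^ 2), F b t := by
    intro t ht
    have ht' : g⁻¹ < t := ht
    have ht0 : 0 < t := lt_trans hginv ht'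
    have hs : 0 < Real.sqrt (g * (t - g⁻¹)) :=
      Real.sqrt_pos.mpr (mul_pos hg (sub_pos.mpr ht'))
    have hcalc : (∫ b in Ioi (a ^ 2), F b t)
        = (∫ b in Ioi (a ^ 2), Real.exp (-(t / 2 * b))) / (4 * π * Real.sqrt (g * (t - g⁻¹))) := by
      rw [← integral_div]
      refine setIntegral_congr_fun measurableSet_Ioi fun b _ => ?_
      simp [hF_def, neg_mul]
    rw [hcalc, lap_aux_exp_int (by positivity : (0:ℝ) < t / 2),
      show -(t / 2 * a ^ 2) = -(h ^ 2) * t / 2 + -(u * t) by rw [ha2]; ring, Real.exp_add]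
    field_simp
    ring
  -- Fubini
  have hmeasF : AEStronglyMeasurable (Function.uncurry F)
      ((volume.restrict (Ioi (a ^ 2))).prod (volume.restrict (Ioi g⁻¹))) := by
    apply Measurable.aestronglyMeasurable
    unfold F
    fun_prop
  have hprod : Integrable (Function.uncurry F)
      ((volume.restrict (Ioi (a ^ 2))).prod (volume.restrict (Ioi g⁻¹))) := by
    rw [integrable_prod_iff hmeasF]
    constructor
    · filter_upwards [ae_restrict_mem measurableSet_Ioi] with b hb
      have hb0 : 0 < b := lt_of_le_of_lt (by positivity) hb
      exact lap_inner_t_integrable hg hb0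
    · refine Integrable.congr (lap_G_integrable hg ha0) ?_
      filter_upwards [ae_restrict_mem measurableSet_Ioi] with b hb
      have hb0 : 0 < b := lt_of_le_of_lt (by positivity) hb
      have h1 : G b = ∫ t in Ioi g⁻¹, F b t := (lap_inner_t hg hb0).symm
      show G b = ∫ t in Ioi g⁻¹, ‖F b t‖
      calc G b = ∫ t in Ioi g⁻¹, F b t := h1
        _ = ∫ t in Ioi g⁻¹, ‖F b t‖ := by
            refine setIntegral_congr_fun measurableSet_Ioi fun t _ => ?_
            rw [Real.norm_eq_abs, abs_of_nonneg (by unfold F; positivity)]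
  have hswap := integral_integral_swap hprod
  -- Assemble
  calc (∫ t : ℝ,
        (if g⁻¹ < t then Real.exp (-(h ^ 2) * t / 2) / (2 * π * t * Real.sqrt (g * (t - g⁻¹)))
          else 0) * Real.exp (-u * t))
      = ∫ t in Ioi g⁻¹, Real.exp (-(h ^ 2) * t / 2) / (2 * π * t * Real.sqrt (g * (t - g⁻¹)))
          * Real.exp (-u * t) := by rw [hind, integral_indicator measurableSet_Ioi]
    _ = ∫ t in Ioi g⁻¹, ∫ b in Ioi (a ^ 2), F b t :=
        setIntegral_congr_fun measurableSet_Ioi step1b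
    _ = ∫ b in Ioi (a ^ 2), ∫ t in Ioi g⁻¹, F b t := hswap.symm
    _ = ∫ b in Ioi (a ^ 2), G b :=
        setIntegral_congr_fun measurableSet_Ioi fun b hb =>
          lap_inner_t hg (lt_of_le_of_lt (by positivity) hb)
    _ = ∫ x in Ioi a, (Real.sqrt (2 * π * g))⁻¹ * Real.exp (-x ^ 2 / (2 * g)) := lap_G_eq hg ha0
    _ = (gaussianReal 0 g.toNNReal (Set.Ici a)).toReal := by
        have hv : g.toNNReal ≠ 0 := fun h0 => (not_le.mpr hg) (Real.toNNReal_eq_zero.mp h0)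
        rw [gaussianReal_apply_eq_integral 0 hv,
          ENNReal.toReal_ofReal (integral_nonneg fun x => gaussianPDFReal_nonneg _ _ x),
          integral_Ici_eq_integral_Ioi]
        refine (setIntegral_congr_fun measurableSet_Ioi fun x _ => ?_).symm
        simp [gaussianPDFReal, Real.coe_toNNReal _ hg.le]
end

section
/- For every real g > 0, the tail of ρ_0 satisfies lim_{r→∞} √(π² g r) · ∫_{r}^{∞} ρ_0(t) dt = 1; equivalently, ∫_{r}^{∞} ρ_0(t) dt is asymptotically equivalent to (π² g r)^{−1/2} as r → ∞. -/
open MeasureTheory Real Filter Topology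

lemma sqrt_atTop' : Tendsto Real.sqrt atTop atTop :=
  tendsto_atTop_atTop.2 fun b =>
    ⟨max 0 b ^ 2, fun a ha => by
      have h0 : (0:ℝ) ≤ max 0 b ^ 2 := sq_nonneg _
      have := Real.sqrt_le_sqrt ha
      rw [Real.sqrt_sq (le_max_left 0 b)] at this
      exact le_trans (le_max_right 0 b) this⟩

lemma aux_B : Tendsto (fun u : ℝ => u * Real.arctan u⁻¹) atTop (𝓝 1) := by
  have hd : HasDerivAt Real.arctan 1 0 := by
    simpa using Real.hasDerivAt_arctan 0
  have hslope := hasDerivAt_iff_tendsto_slope.mp hd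
  have hinv : Tendsto (fun u : ℝ => u⁻¹) atTop (𝓝[≠] (0 : ℝ)) := by
    refine tendsto_nhdsWithin_of_tendsto_nhds_of_eventually_within _
      tendsto_inv_atTop_zero ?_
    filter_upwards [eventually_gt_atTop (0 : ℝ)] with u hu
    simp [Set.mem_compl_iff, inv_ne_zero (ne_of_gt hu)]
  have := hslope.comp hinv
  refine this.congr' ?_
  filter_upwards with u
  simp [slope_def_field, Real.arctan_zero, div_eq_mul_inv, inv_inv, mul_comm]

lemma aux_A : Tendsto (fun u : ℝ => Real.sqrt (u ^ 2 + 1) / u) atTop (𝓝 1) := by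
  have h : Tendsto (fun u : ℝ => Real.sqrt (1 + (u⁻¹) ^ 2)) atTop (𝓝 1) := by
    have h1 : Tendsto (fun u : ℝ => 1 + (u⁻¹) ^ 2) atTop (𝓝 (1 + 0 ^ 2)) :=
      tendsto_const_nhds.add (tendsto_inv_atTop_zero.pow 2)
    have := (Real.continuous_sqrt.tendsto _).comp h1
    simpa [Function.comp_def] using this
  refine h.congr' ?_
  filter_upwards [eventually_gt_atTop (0 : ℝ)] with u hu
  have hu2 : (0:ℝ) < u ^ 2 := by positivity
  rw [show 1 + (u⁻¹) ^ 2 = (u ^ 2 + 1) / u ^ 2 by field_simp,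
    Real.sqrt_div (by positivity), Real.sqrt_sq hu.le]

lemma aux_h : Tendsto (fun u : ℝ => Real.sqrt (u ^ 2 + 1) * Real.arctan u⁻¹) atTop (𝓝 1) := by
  have := aux_A.mul aux_B
  rw [one_mul] at this
  refine this.congr' ?_
  filter_upwards [eventually_gt_atTop (0 : ℝ)] with u hu
  field_simp

lemma tail_eval (g : ℝ) (hg : 0 < g) (r : ℝ) (hr : g⁻¹ < r) :
    (∫ t in Set.Ioi r,
        (if g⁻¹ < t then 1 / (2 * π * t * Real.sqrt (g * (t - g⁻¹))) else 0))
      = 1 / 2 - (1 / π) * Real.arctan (Real.sqrt (g * r - 1)) := by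
  set f : ℝ → ℝ := fun t => (1 / π) * Real.arctan (Real.sqrt (g * t - 1)) with hf
  have hcont : ContinuousWithinAt f (Set.Ici r) r := by
    apply Continuous.continuousWithinAt
    exact continuous_const.mul (Real.continuous_arctan.comp
      (Real.continuous_sqrt.comp (by continuity)))
  have hderiv : ∀ t ∈ Set.Ioi r,
      HasDerivAt f ((if g⁻¹ < t then 1 / (2 * π * t * Real.sqrt (g * (t - g⁻¹))) else 0)) t := by
    intro t ht
    have htr : g⁻¹ < t := lt_trans hr ht
    have ht0 : 0 < t := lt_trans (inv_pos.mpr hg) htr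
    have hp : 0 < g * t - 1 := by
      have := (inv_lt_iff_one_lt_mul₀ hg).mp htr
      linarith [mul_comm t g]
    have hs : 0 < Real.sqrt (g * t - 1) := Real.sqrt_pos.mpr hp
    have h1 : HasDerivAt (fun t : ℝ => g * t - 1) g t := by
      simpa using ((hasDerivAt_id t).const_mul g).sub_const 1
    have h2 : HasDerivAt Real.sqrt (1 / (2 * Real.sqrt (g * t - 1))) (g * t - 1) :=
      Real.hasDerivAt_sqrt hp.ne'
    have h3 := h2.comp t h1
    have h4 := (Real.hasDerivAt_arctan (Real.sqrt (g * t - 1))).comp t h3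
    have h5 := h4.const_mul (1 / π)
    rw [if_pos htr]
    refine h5.congr_deriv ?_
    have hsq : Real.sqrt (g * t - 1) ^ 2 = g * t - 1 := Real.sq_sqrt hp.le
    have hid : g * (t - g⁻¹) = g * t - 1 := by field_simp
    rw [hid, hsq, show 1 + (g * t - 1) = g * t by ring]
    have hπ : π ≠ 0 := pi_ne_zero
    have hsn : Real.sqrt (g * t - 1) ≠ 0 := hs.ne'
    field_simp
  have hpos : ∀ t ∈ Set.Ioi r,
      0 ≤ (if g⁻¹ < t then 1 / (2 * π * t * Real.sqrt (g * (t - g⁻¹))) else 0) := by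
    intro t ht
    have htr : g⁻¹ < t := lt_trans hr ht
    have ht0 : 0 < t := lt_trans (inv_pos.mpr hg) htr
    rw [if_pos htr]
    positivity
  have hlim : Tendsto f atTop (𝓝 (1 / 2)) := by
    have h1 : Tendsto (fun t : ℝ => g * t - 1) atTop atTop :=
      (tendsto_id.const_mul_atTop hg).atTop_add tendsto_const_nhds
    have h2 : Tendsto (fun t : ℝ => Real.sqrt (g * t - 1)) atTop atTop :=
      sqrt_atTop'.comp h1
    have h3 : Tendsto (fun t : ℝ => Real.arctan (Real.sqrt (g * t - 1))) atTop (𝓝 (π / 2)) :=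
      (Real.tendsto_arctan_atTop.mono_right nhdsWithin_le_nhds).comp h2
    have h4 := h3.const_mul (1 / π)
    have : 1 / π * (π / 2) = 1 / 2 := by
      field_simp
    rwa [this] at h4
  have := integral_Ioi_of_hasDerivAt_of_nonneg hcont hderiv hpos hlim
  exact this

/-- The heavy-tail asymptotic (1.6) of the paper: for `g > 0`, the tail of the density
`ρ_0(t) = 1/(2π t √(g (t − g⁻¹)))` (for `t > g⁻¹`, and `0` otherwise) satisfies
`√(π² g r) · ∫_{r}^{∞} ρ_0(t) dt → 1` as `r → ∞`. -/
theorem tail_asymptotics (g : ℝ) (hg : 0 < g) :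
    Tendsto
      (fun r : ℝ =>
        Real.sqrt (π ^ 2 * g * r) *
          ∫ t in Set.Ioi r,
            (if g⁻¹ < t then 1 / (2 * π * t * Real.sqrt (g * (t - g⁻¹))) else 0))
      atTop (nhds 1) := by
  have hcomp : Tendsto (fun r : ℝ => Real.sqrt (g * r - 1)) atTop atTop :=
    sqrt_atTop'.comp ((tendsto_id.const_mul_atTop hg).atTop_add tendsto_const_nhds)
  have := aux_h.comp hcomp
  refine this.congr' ?_
  filter_upwards [eventually_gt_atTop g⁻¹, eventually_gt_atTop (0 : ℝ)] with r hr hr0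
  have hp : 0 < g * r - 1 := by
    have := (inv_lt_iff_one_lt_mul₀ hg).mp hr
    linarith [mul_comm r g]
  have hs : 0 < Real.sqrt (g * r - 1) := Real.sqrt_pos.mpr hp
  have hsq : Real.sqrt (g * r - 1) ^ 2 = g * r - 1 := Real.sq_sqrt hp.le
  simp only [Function.comp]
  rw [tail_eval g hg r hr]
  rw [hsq]
  have hgr : Real.sqrt (π ^ 2 * g * r) = π * Real.sqrt (g * r) := by
    rw [show π ^ 2 * g * r = π ^ 2 * (g * r) by ring, Real.sqrt_mul (by positivity),
      Real.sqrt_sq pi_pos.le]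
  rw [hgr, Real.arctan_inv_of_pos hs, show g * r - 1 + 1 = g * r by ring]
  field_simp
end

section
/- Let (G, λ, κ) be a transient weighted graph with connected, locally finite induced graph, and let g denote its Green function. Let x_0 ∈ G, let g_0 ∈ (0, ∞), and let (x_n)_{n≥0} be a sequence in G such that the graph distance d_G(x_0, x_n) tends to ∞ as n → ∞ and g(x_n, x_n) ≤ g_0 for all n. Then g(x_0, x_n) → 0 as n → ∞. -/
open scoped ENNReal NNReal Classical
open Filter

/-- `λ_x = κ_x + Σ_y λ(x,y)`, the total weight at `x`. -/
noncomputable def lamTot {G : Type*} (lam : G → G → ℝ) (kappa : G → ℝ) (x : G) : ℝ :=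
  kappa x + ∑' y, lam x y

/-- One-step transition kernel `p(x,y) = λ(x,y)/λ_x` of the discrete-time walk,
taking values in `[0,∞]`. -/
noncomputable def transStep {G : Type*} (lam : G → G → ℝ) (kappa : G → ℝ) (x y : G) : ℝ≥0∞ :=
  ENNReal.ofReal (lam x y / lamTot lam kappa x)

/-- `n`-step transition kernel: `p⁽⁰⁾(x,y) = 1_{x=y}`,
`p⁽ⁿ⁺¹⁾(x,y) = Σ_z p⁽ⁿ⁾(x,z) p(z,y)`. -/
noncomputable def nStep {G : Type*} (lam : G → G → ℝ) (kappa : G → ℝ) :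
    ℕ → G → G → ℝ≥0∞
  | 0, x, y => if x = y then 1 else 0
  | n + 1, x, y => ∑' z, nStep lam kappa n x z * transStep lam kappa z y

/-- Green function `g(x,y) = λ_y⁻¹ Σ_{n≥0} p⁽ⁿ⁾(x,y) ∈ [0,∞]`. -/
noncomputable def greenFn {G : Type*} (lam : G → G → ℝ) (kappa : G → ℝ) (x y : G) : ℝ≥0∞ :=
  (ENNReal.ofReal (lamTot lam kappa y))⁻¹ * ∑' n, nStep lam kappa n x y

/-- The graph induced by the weights: edge set `{{x,y} : λ(x,y) > 0}`. -/
noncomputable def inducedGraph {G : Type*} (lam : G → G → ℝ) : SimpleGraph G :=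
  SimpleGraph.fromRel (fun x y => 0 < lam x y)

namespace GDaux

variable {G : Type*} (lam : G → G → ℝ) (kappa : G → ℝ)

/-- `L x = ofReal λ_x`. -/
noncomputable def L (x : G) : ℝ≥0∞ := ENNReal.ofReal (lamTot lam kappa x)

/-- normalized kernel `V n x y = λ_y⁻¹ p⁽ⁿ⁾(x,y)`. -/
noncomputable def V (n : ℕ) (x y : G) : ℝ≥0∞ := (L lam kappa y)⁻¹ * nStep lam kappa n x y

variable {lam kappa}

lemma L_ne_zero (hpos : ∀ x, 0 < lamTot lam kappa x) (x : G) : L lam kappa x ≠ 0 :=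
  (ENNReal.ofReal_pos.mpr (hpos x)).ne'

lemma L_ne_top (x : G) : L lam kappa x ≠ ⊤ := ENNReal.ofReal_ne_top

lemma nStep_one (x y : G) : nStep lam kappa 1 x y = transStep lam kappa x y := by
  show (∑' z, nStep lam kappa 0 x z * transStep lam kappa z y) = _
  rw [tsum_eq_single x]
  · simp [nStep]
  · intro z hz
    simp [nStep, (Ne.symm hz : ¬ x = z)]

lemma chapman (m n : ℕ) (x y : G) :
    nStep lam kappa (m + n) x y = ∑' z, nStep lam kappa m x z * nStep lam kappa n z y := by
  induction n generalizing y with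
  | zero =>
    rw [tsum_eq_single y]
    · simp [nStep]
    · intro z hz
      simp [nStep, hz]
  | succ n ih =>
    show (∑' z, nStep lam kappa (m + n) x z * transStep lam kappa z y) = _
    calc (∑' z, nStep lam kappa (m + n) x z * transStep lam kappa z y)
        = ∑' z, (∑' w, nStep lam kappa m x w * nStep lam kappa n w z) * transStep lam kappa z y := by
          simp only [ih]
      _ = ∑' z, ∑' w, nStep lam kappa m x w * nStep lam kappa n w z * transStep lam kappa z y := by
          simp only [ENNReal.tsum_mul_right]
      _ = ∑' w, ∑' z, nStep lam kappa m x w * nStep lam kappa n w z * transStep lam kappa z y :=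
          ENNReal.tsum_comm
      _ = ∑' w, nStep lam kappa m x w * ∑' z, nStep lam kappa n w z * transStep lam kappa z y := by
          simp only [mul_assoc, ENNReal.tsum_mul_left]
      _ = ∑' w, nStep lam kappa m x w * nStep lam kappa (n + 1) w y := rfl

lemma L_mul_trans (hsymm : ∀ x y, lam x y = lam y x) (hnonneg : ∀ x y, 0 ≤ lam x y)
    (hpos : ∀ x, 0 < lamTot lam kappa x) (z y : G) :
    L lam kappa z * transStep lam kappa z y = ENNReal.ofReal (lam z y) := by
  rw [L, transStep, ← ENNReal.ofReal_mul (hpos z).le, mul_div_cancel₀ _ (hpos z).ne']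

lemma rev (hsymm : ∀ x y, lam x y = lam y x) (hnonneg : ∀ x y, 0 ≤ lam x y)
    (hpos : ∀ x, 0 < lamTot lam kappa x) (n : ℕ) :
    ∀ x y : G, L lam kappa x * nStep lam kappa n x y = L lam kappa y * nStep lam kappa n y x := by
  induction n with
  | zero =>
    intro x y
    by_cases h : x = y
    · subst h; rfl
    · simp [nStep, h, (Ne.symm h : ¬ y = x)]
  | succ n ih =>
    intro x y
    have hy : nStep lam kappa (n + 1) y x = ∑' z, transStep lam kappa y z * nStep lam kappa n z x := by
      have h1 : n + 1 = 1 + n := by omega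
      rw [h1, chapman 1 n]
      simp only [nStep_one]
    calc L lam kappa x * nStep lam kappa (n + 1) x y
        = ∑' z, (L lam kappa x * nStep lam kappa n x z) * transStep lam kappa z y := by
          show L lam kappa x * ∑' z, nStep lam kappa n x z * transStep lam kappa z y = _
          rw [← ENNReal.tsum_mul_left]
          simp only [mul_assoc]
      _ = ∑' z, nStep lam kappa n z x * (L lam kappa z * transStep lam kappa z y) := by
          congr 1; funext z; rw [ih x z]; ring
      _ = ∑' z, nStep lam kappa n z x * (L lam kappa y * transStep lam kappa y z) := by
          congr 1; funext z
          rw [L_mul_trans hsymm hnonneg hpos, L_mul_trans hsymm hnonneg hpos, hsymm]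
      _ = L lam kappa y * ∑' z, transStep lam kappa y z * nStep lam kappa n z x := by
          rw [← ENNReal.tsum_mul_left]; congr 1; funext z; ring
      _ = L lam kappa y * nStep lam kappa (n + 1) y x := by rw [hy]

lemma V_symm (hsymm : ∀ x y, lam x y = lam y x) (hnonneg : ∀ x y, 0 ≤ lam x y)
    (hpos : ∀ x, 0 < lamTot lam kappa x) (n : ℕ) (x y : G) :
    V lam kappa n x y = V lam kappa n y x := by
  have hx0 := L_ne_zero hpos x
  have hy0 := L_ne_zero hpos y
  have hxt := L_ne_top (lam := lam) (kappa := kappa) x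
  have hyt := L_ne_top (lam := lam) (kappa := kappa) y
  have h := rev hsymm hnonneg hpos n x y
  have h1 : nStep lam kappa n x y
      = (L lam kappa x)⁻¹ * (L lam kappa y * nStep lam kappa n y x) := by
    rw [← h, ← mul_assoc, ENNReal.inv_mul_cancel hx0 hxt, one_mul]
  rw [V, V, h1, ← mul_assoc, ← mul_assoc, mul_comm ((L lam kappa y)⁻¹) ((L lam kappa x)⁻¹),
    mul_assoc ((L lam kappa x)⁻¹), ENNReal.inv_mul_cancel hy0 hyt, mul_one]

lemma V_conv (hpos : ∀ x, 0 < lamTot lam kappa x) (a b : ℕ) (x y : G) :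
    V lam kappa (a + b) x y = ∑' z, L lam kappa z * V lam kappa a x z * V lam kappa b z y := by
  rw [V, chapman, ← ENNReal.tsum_mul_left]
  congr 1; funext z
  rw [V, V]
  have hz0 := L_ne_zero hpos z
  have hzt := L_ne_top (lam := lam) (kappa := kappa) z
  calc (L lam kappa y)⁻¹ * (nStep lam kappa a x z * nStep lam kappa b z y)
      = (L lam kappa z * (L lam kappa z)⁻¹)
        * ((L lam kappa y)⁻¹ * (nStep lam kappa a x z * nStep lam kappa b z y)) := by
        rw [ENNReal.mul_inv_cancel hz0 hzt, one_mul]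
    _ = L lam kappa z * ((L lam kappa z)⁻¹ * nStep lam kappa a x z)
        * ((L lam kappa y)⁻¹ * nStep lam kappa b z y) := by ring

lemma V_diag (hsymm : ∀ x y, lam x y = lam y x) (hnonneg : ∀ x y, 0 ≤ lam x y)
    (hpos : ∀ x, 0 < lamTot lam kappa x) (a : ℕ) (x : G) :
    V lam kappa (a + a) x x = ∑' z, L lam kappa z * V lam kappa a x z * V lam kappa a x z := by
  rw [V_conv hpos]
  congr 1; funext z
  rw [V_symm hsymm hnonneg hpos a z x]

lemma two_mul_le (a b : ℝ≥0∞) : 2 * (a * b) ≤ a * a + b * b := by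
  rcases eq_or_ne a ⊤ with ha | ha
  · rcases eq_or_ne b 0 with hb | hb
    · simp [hb]
    · have : a * a = ⊤ := by simp [ha]
      simp [this]
  rcases eq_or_ne b ⊤ with hb | hb
  · rcases eq_or_ne a 0 with ha' | ha'
    · simp [ha']
    · have : b * b = ⊤ := by simp [hb]
      simp [this]
  lift a to ℝ≥0 using ha
  lift b to ℝ≥0 using hb
  rw [← ENNReal.coe_mul, ← ENNReal.coe_mul, ← ENNReal.coe_mul, ← ENNReal.coe_add]
  rw [show ((2 : ℝ≥0∞)) = ((2 : ℝ≥0) : ℝ≥0∞) by norm_num, ← ENNReal.coe_mul, ENNReal.coe_le_coe,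
    ← NNReal.coe_le_coe]
  push_cast
  nlinarith [sq_nonneg ((a:ℝ) - (b:ℝ))]

lemma key (hsymm : ∀ x y, lam x y = lam y x) (hnonneg : ∀ x y, 0 ≤ lam x y)
    (hpos : ∀ x, 0 < lamTot lam kappa x) (a b : ℕ) (x y : G) {c : ℝ≥0∞}
    (hc0 : c ≠ 0) (hct : c ≠ ⊤) :
    2 * V lam kappa (a + b) x y
      ≤ (c * c) * V lam kappa (a + a) x x + (c * c)⁻¹ * V lam kappa (b + b) y y := by
  rw [V_conv hpos, V_diag hsymm hnonneg hpos, V_diag hsymm hnonneg hpos,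
    ← ENNReal.tsum_mul_left (a := c * c), ← ENNReal.tsum_mul_left (a := (c * c)⁻¹),
    ← ENNReal.tsum_mul_left (a := 2), ← ENNReal.tsum_add]
  apply ENNReal.tsum_le_tsum
  intro z
  rw [ENNReal.mul_inv (Or.inl hc0) (Or.inl hct)]
  set u := V lam kappa a x z
  set v := V lam kappa b z y
  have hv : V lam kappa b y z = v := V_symm hsymm hnonneg hpos b y z
  rw [hv]
  set w := L lam kappa z
  have h1 : 2 * (w * u * v) = w * (2 * ((c * u) * (c⁻¹ * v))) := by
    have h2 : (c * u) * (c⁻¹ * v) = (c * c⁻¹) * (u * v) := by ring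
    rw [h2, ENNReal.mul_inv_cancel hc0 hct, one_mul]; ring
  calc 2 * (w * u * v) = w * (2 * ((c * u) * (c⁻¹ * v))) := h1
    _ ≤ w * ((c * u) * (c * u) + (c⁻¹ * v) * (c⁻¹ * v)) :=
        mul_le_mul_right (two_mul_le _ _) w
    _ = c * c * (w * u * u) + c⁻¹ * c⁻¹ * (w * v * v) := by ring

lemma support (hdiag : ∀ x, lam x x = 0) (hpos : ∀ x, 0 < lamTot lam kappa x)
    (hconn : (inducedGraph lam).Connected) (n : ℕ) :
    ∀ x y : G, n < (inducedGraph lam).dist x y → nStep lam kappa n x y = 0 := by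
  induction n with
  | zero =>
    intro x y h
    have hxy : x ≠ y := by
      rintro rfl
      simp [SimpleGraph.dist_self] at h
    simp [nStep, hxy]
  | succ n ih =>
    intro x y h
    show (∑' z, nStep lam kappa n x z * transStep lam kappa z y) = 0
    rw [ENNReal.tsum_eq_zero]
    intro z
    by_cases hz : transStep lam kappa z y = 0
    · rw [hz, mul_zero]
    · have hpos' : 0 < lam z y / lamTot lam kappa z := by
        by_contra hle
        exact hz (by simpa [transStep] using ENNReal.ofReal_eq_zero.mpr (not_lt.mp hle))
      have hlam : 0 < lam z y := by
        have h2 : 0 < (lam z y / lamTot lam kappa z) * lamTot lam kappa z :=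
          mul_pos hpos' (hpos z)
        rwa [div_mul_cancel₀ _ (hpos z).ne'] at h2
      have hzy : z ≠ y := by
        rintro rfl
        rw [hdiag z] at hlam
        exact lt_irrefl 0 hlam
      have hadj : (inducedGraph lam).Adj z y := by
        rw [inducedGraph, SimpleGraph.fromRel_adj]
        exact ⟨hzy, Or.inl hlam⟩
      have hd1 : (inducedGraph lam).dist z y ≤ 1 := by
        have := SimpleGraph.dist_le hadj.toWalk
        simpa using this
      have htri : (inducedGraph lam).dist x y
          ≤ (inducedGraph lam).dist x z + (inducedGraph lam).dist z y :=
        hconn.dist_triangle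
      have : n < (inducedGraph lam).dist x z := by omega
      rw [ih x z this, zero_mul]

lemma green_eq (x y : G) : greenFn lam kappa x y = ∑' n, V lam kappa n x y := by
  simp only [V, L]
  rw [ENNReal.tsum_mul_left]
  rfl

lemma tsum_shift {f : ℕ → ℝ≥0∞} {d : ℕ} (h : ∀ n < d, f n = 0) :
    ∑' n, f n = ∑' k, f (k + d) := by
  refine (Function.Injective.tsum_eq (g := fun k => k + d) (add_left_injective d) ?_).symm
  intro n hn
  rcases lt_or_ge n d with hlt | hge
  · exact absurd (h n hlt) hn
  · exact ⟨n - d, Nat.sub_add_cancel hge⟩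

lemma inj_two_mul_add (e : ℕ) : Function.Injective (fun j : ℕ => 2 * j + e) := by
  intro a b hab
  dsimp only at hab
  omega

lemma even_odd_tsum_le (F : ℕ → ℝ≥0∞) (m : ℕ → ℕ) (d e1 e2 : ℕ)
    (h1 : ∀ j, m (2 * j) = 2 * j + e1 + d) (h2 : ∀ j, m (2 * j + 1) = 2 * j + e2 + d) :
    ∑' k, F (m k) ≤ 2 * ∑' n, F (n + d) := by
  rw [← tsum_even_add_odd (f := fun k => F (m k)) ENNReal.summable ENNReal.summable, two_mul]
  apply add_le_add
  · calc (∑' j, F (m (2 * j))) = ∑' j, (fun n => F (n + d)) (2 * j + e1) := by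
          simp only [h1]
      _ ≤ ∑' n, F (n + d) :=
          ENNReal.tsum_comp_le_tsum_of_injective (inj_two_mul_add _) _
  · calc (∑' j, F (m (2 * j + 1))) = ∑' j, (fun n => F (n + d)) (2 * j + e2) := by
          simp only [h2]
      _ ≤ ∑' n, F (n + d) :=
          ENNReal.tsum_comp_le_tsum_of_injective (inj_two_mul_add _) _

lemma main_bound (hsymm : ∀ x y, lam x y = lam y x) (hnonneg : ∀ x y, 0 ≤ lam x y)
    (hdiag : ∀ x, lam x x = 0) (hpos : ∀ x, 0 < lamTot lam kappa x)
    (hconn : (inducedGraph lam).Connected) (x₀ y : G) {c : ℝ≥0∞} (hc0 : c ≠ 0) (hct : c ≠ ⊤) :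
    greenFn lam kappa x₀ y
      ≤ (c * c) * (∑' k, V lam kappa (k + (inducedGraph lam).dist x₀ y) x₀ x₀)
        + (c * c)⁻¹ * greenFn lam kappa y y := by
  set d := (inducedGraph lam).dist x₀ y with hd
  have hmul : ∀ p q : ℝ≥0∞, 2 * p ≤ 2 * q → p ≤ q := by
    intro p q h
    exact (ENNReal.mul_le_mul_iff_right two_ne_zero ENNReal.ofNat_ne_top).mp h
  apply hmul
  have hshift : greenFn lam kappa x₀ y = ∑' k, V lam kappa (k + d) x₀ y := by
    rw [green_eq]
    exact tsum_shift (fun n hn => by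
      rw [V, support hdiag hpos hconn n x₀ y hn, mul_zero])
  calc 2 * greenFn lam kappa x₀ y
      = ∑' k, 2 * V lam kappa (k + d) x₀ y := by rw [hshift, ENNReal.tsum_mul_left]
    _ ≤ ∑' k, ((c * c) * V lam kappa ((k + d + 1) / 2 + (k + d + 1) / 2) x₀ x₀
          + (c * c)⁻¹ * V lam kappa ((k + d) / 2 + (k + d) / 2) y y) := by
        apply ENNReal.tsum_le_tsum
        intro k
        have hab : (k + d + 1) / 2 + (k + d) / 2 = k + d := by omega
        have hk := key hsymm hnonneg hpos ((k + d + 1) / 2) ((k + d) / 2) x₀ y hc0 hct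
        rwa [hab] at hk
    _ = (c * c) * ∑' k, V lam kappa ((k + d + 1) / 2 + (k + d + 1) / 2) x₀ x₀
          + (c * c)⁻¹ * ∑' k, V lam kappa ((k + d) / 2 + (k + d) / 2) y y := by
        rw [ENNReal.tsum_add, ENNReal.tsum_mul_left, ENNReal.tsum_mul_left]
    _ ≤ (c * c) * (2 * ∑' k, V lam kappa (k + d) x₀ x₀)
          + (c * c)⁻¹ * (2 * ∑' n, V lam kappa (n + 0) y y) := by
        apply add_le_add
        · apply mul_le_mul_right
          apply even_odd_tsum_le (fun n => V lam kappa n x₀ x₀)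
            (fun k => (k + d + 1) / 2 + (k + d + 1) / 2) d
            (2 * ((d + 1) / 2) - d) (2 + 2 * (d / 2) - d)
          · intro j; omega
          · intro j; omega
        · apply mul_le_mul_right
          apply even_odd_tsum_le (fun n => V lam kappa n y y)
            (fun k => (k + d) / 2 + (k + d) / 2) 0 (2 * (d / 2)) (2 * ((d + 1) / 2))
          · intro j; omega
          · intro j; omega
    _ = 2 * ((c * c) * (∑' k, V lam kappa (k + d) x₀ x₀)
          + (c * c)⁻¹ * greenFn lam kappa y y) := by
        rw [green_eq]
        simp only [Nat.add_zero]
        ring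

end GDaux

/-- Lemma A.1 of the paper (decay of the Green function): on a transient weighted graph
with connected locally finite induced graph, if `d_G(x₀, xₙ) → ∞` and
`g(xₙ,xₙ) ≤ g₀` for all `n`, then `g(x₀, xₙ) → 0`. -/
theorem green_decay {G : Type*} [Countable G] [Infinite G]
    (lam : G → G → ℝ) (kappa : G → ℝ)
    (hsymm : ∀ x y, lam x y = lam y x)
    (hnonneg : ∀ x y, 0 ≤ lam x y)
    (hdiag : ∀ x, lam x x = 0)
    (hkappa : ∀ x, 0 ≤ kappa x)
    (hsum : ∀ x, Summable (fun y => lam x y))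
    (hpos : ∀ x, 0 < lamTot lam kappa x)
    (hconn : (inducedGraph lam).Connected)
    (hlocfin : ∀ v : G, ((inducedGraph lam).neighborSet v).Finite)
    (htransient : ∀ x, greenFn lam kappa x x < ⊤)
    (x₀ : G) (g₀ : ℝ) (hg₀ : 0 < g₀)
    (xs : ℕ → G)
    (hdist : Tendsto (fun n => (inducedGraph lam).dist x₀ (xs n)) atTop atTop)
    (hbound : ∀ n, greenFn lam kappa (xs n) (xs n) ≤ ENNReal.ofReal g₀) :
    Tendsto (fun n => greenFn lam kappa x₀ (xs n)) atTop (nhds 0) := by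
  classical
  set T : ℕ → ℝ≥0∞ := fun m => ∑' k, GDaux.V lam kappa (k + m) x₀ x₀ with hT
  have hsumfin : (∑' n, GDaux.V lam kappa n x₀ x₀) ≠ ⊤ := by
    rw [← GDaux.green_eq]
    exact (htransient x₀).ne
  have hTail : Tendsto T atTop (nhds 0) :=
    ENNReal.tendsto_sum_nat_add _ hsumfin
  rw [ENNReal.tendsto_atTop_zero]
  intro ε hε
  rcases eq_or_ne ε ⊤ with rfl | hεt
  · exact ⟨0, fun n _ => le_top⟩
  set g' : ℝ≥0∞ := ENNReal.ofReal g₀ with hg'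
  have hg'0 : g' ≠ 0 := (ENNReal.ofReal_pos.mpr hg₀).ne'
  have hg't : g' ≠ ⊤ := ENNReal.ofReal_ne_top
  set c : ℝ≥0∞ := 1 + 2 * g' * ε⁻¹ with hc
  have hc1 : (1 : ℝ≥0∞) ≤ c := le_add_of_nonneg_right zero_le
  have hc0 : c ≠ 0 := by
    intro h; rw [h] at hc1; exact (not_le.mpr zero_lt_one) hc1
  have hct : c ≠ ⊤ := by
    rw [hc]
    refine ENNReal.add_ne_top.mpr ⟨ENNReal.one_ne_top, ?_⟩
    exact ENNReal.mul_ne_top (ENNReal.mul_ne_top ENNReal.ofNat_ne_top hg't)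
      (ENNReal.inv_ne_top.mpr hε.ne')
  have hcc0 : c * c ≠ 0 := mul_ne_zero hc0 hc0
  have hcct : c * c ≠ ⊤ := ENNReal.mul_ne_top hct hct
  -- (c*c)⁻¹ * g' ≤ ε / 2
  have hcg : (c * c)⁻¹ * g' ≤ ε / 2 := by
    have h1 : c ≤ c * c := le_mul_of_one_le_left zero_le hc1
    have h2 : 2 * g' * ε⁻¹ ≤ c := le_add_self
    have h3 : (c * c)⁻¹ ≤ (2 * g' * ε⁻¹)⁻¹ :=
      le_trans (ENNReal.inv_le_inv.mpr h1) (ENNReal.inv_le_inv.mpr h2)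
    have h4 : (2 * g' * ε⁻¹)⁻¹ * g' = ε / 2 := by
      rw [ENNReal.mul_inv (Or.inr (ENNReal.inv_ne_top.mpr hε.ne'))
        (Or.inr (ENNReal.inv_ne_zero.mpr hεt)), inv_inv,
        ENNReal.mul_inv (Or.inl (by norm_num)) (Or.inl (by norm_num))]
      calc 2⁻¹ * g'⁻¹ * ε * g' = 2⁻¹ * ε * (g'⁻¹ * g') := by ring
        _ = 2⁻¹ * ε := by rw [ENNReal.inv_mul_cancel hg'0 hg't, mul_one]
        _ = ε / 2 := by rw [ENNReal.div_eq_inv_mul]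
    calc (c * c)⁻¹ * g' ≤ (2 * g' * ε⁻¹)⁻¹ * g' := mul_le_mul_left h3 g'
      _ = ε / 2 := h4
  -- find threshold
  have hδpos : (0 : ℝ≥0∞) < (c * c)⁻¹ * (ε / 2) := by
    apply ENNReal.mul_pos
    · exact (ENNReal.inv_ne_zero.mpr hcct)
    · exact (ENNReal.div_pos hε.ne' ENNReal.ofNat_ne_top).ne'
  obtain ⟨M, hM⟩ := (ENNReal.tendsto_atTop_zero.mp hTail) _ hδpos
  obtain ⟨N, hN⟩ := eventually_atTop.mp (hdist.eventually_ge_atTop M)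
  refine ⟨N, fun n hn => ?_⟩
  have hdn : M ≤ (inducedGraph lam).dist x₀ (xs n) := hN n hn
  calc greenFn lam kappa x₀ (xs n)
      ≤ (c * c) * T ((inducedGraph lam).dist x₀ (xs n))
        + (c * c)⁻¹ * greenFn lam kappa (xs n) (xs n) :=
        GDaux.main_bound hsymm hnonneg hdiag hpos hconn x₀ (xs n) hc0 hct
    _ ≤ (c * c) * ((c * c)⁻¹ * (ε / 2)) + (c * c)⁻¹ * g' :=
        add_le_add (mul_le_mul_right (hM _ hdn) _) (mul_le_mul_right (hbound n) _)
    _ ≤ ε / 2 + ε / 2 := by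
        apply add_le_add _ hcg
        rw [← mul_assoc, ENNReal.mul_inv_cancel hcc0 hcct, one_mul]
    _ = ε := ENNReal.add_halves ε
end

section
/- Let (G, λ, κ) be a transient weighted graph with connected, locally finite induced graph, let g denote its Green function, and let g_0 ∈ (0, ∞). If A ⊆ G is infinite and g(x,x) ≤ g_0 for all x ∈ A, then A has infinite capacity: for every ε > 0 there exist a finite nonempty set F ⊆ A and a probability vector μ on F whose energy satisfies Σ_{x,y ∈ F} g(x,y) μ(x) μ(y) ≤ ε. -/
open scoped ENNReal Classical

section Aux

variable {G : Type*} (lam : G → G → ℝ) (kappa : G → ℝ)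

lemma nStep_zero (x y : G) : nStep lam kappa 0 x y = if x = y then 1 else 0 := rfl

lemma nStep_succ (n : ℕ) (x y : G) :
    nStep lam kappa (n+1) x y = ∑' z, nStep lam kappa n x z * transStep lam kappa z y := rfl

lemma nStep_one (x y : G) : nStep lam kappa 1 x y = transStep lam kappa x y := by
  rw [nStep_succ]
  rw [tsum_eq_single x]
  · simp [nStep_zero]
  · intro z hz
    simp [nStep_zero, (Ne.symm hz : ¬ x = z)]

/-- left Chapman–Kolmogorov -/
lemma nStep_succ_left (n : ℕ) (x y : G) :
    nStep lam kappa (n+1) x y = ∑' z, transStep lam kappa x z * nStep lam kappa n z y := by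
  induction n generalizing x y with
  | zero =>
    rw [nStep_one]
    rw [tsum_eq_single y]
    · simp [nStep_zero]
    · intro z hz
      simp [nStep_zero, hz]
  | succ n ih =>
    rw [nStep_succ]
    calc ∑' z, nStep lam kappa (n+1) x z * transStep lam kappa z y
        = ∑' z, (∑' w, transStep lam kappa x w * nStep lam kappa n w z) *
            transStep lam kappa z y := by
          congr 1; ext z; rw [ih]
      _ = ∑' z, ∑' w, transStep lam kappa x w * nStep lam kappa n w z *
            transStep lam kappa z y := by
          congr 1; ext z; rw [ENNReal.tsum_mul_right]
      _ = ∑' w, ∑' z, transStep lam kappa x w * nStep lam kappa n w z *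
            transStep lam kappa z y := ENNReal.tsum_comm
      _ = ∑' w, transStep lam kappa x w * nStep lam kappa (n+1) w y := by
          congr 1; ext w
          rw [nStep_succ]
          rw [← ENNReal.tsum_mul_left]
          congr 1; ext z; ring

end Aux

/-- first-hitting kernel: `hitK k x y` = probability that the walk started at `x`
first visits `y` at time `k+1`. -/
noncomputable def hitK {G : Type*} (lam : G → G → ℝ) (kappa : G → ℝ) : ℕ → G → G → ℝ≥0∞
  | 0, x, y => transStep lam kappa x y
  | k + 1, x, y => ∑' z, if z = y then 0 else
      transStep lam kappa x z * hitK lam kappa k z y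

section Aux2
variable {G : Type*} (lam : G → G → ℝ) (kappa : G → ℝ)

lemma hitK_zero (x y : G) : hitK lam kappa 0 x y = transStep lam kappa x y := rfl

lemma hitK_succ (k : ℕ) (x y : G) : hitK lam kappa (k+1) x y =
    ∑' z, if z = y then 0 else transStep lam kappa x z * hitK lam kappa k z y := rfl

lemma hitK_le (k : ℕ) (x y : G) : hitK lam kappa k x y ≤ nStep lam kappa (k+1) x y := by
  induction k generalizing x with
  | zero => rw [nStep_one]; exact le_rfl
  | succ k ih =>
    rw [hitK_succ, nStep_succ_left]
    refine ENNReal.tsum_le_tsum fun z => ?_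
    split
    · exact zero_le
    · exact mul_le_mul_right (ih z) _

lemma hitK_succ_mul (k : ℕ) (x y : G) (c : ℝ≥0∞) :
    hitK lam kappa (k+1) x y * c =
      ∑' z, if z = y then 0 else transStep lam kappa x z * (hitK lam kappa k z y * c) := by
  rw [hitK_succ, ← ENNReal.tsum_mul_right]
  congr 1; ext z
  split
  · simp
  · ring

lemma tsum_ite_sum_comm (y : G) (m : ℕ) (f : ℕ → G → ℝ≥0∞) (g : G → ℝ≥0∞) :
    (∑' z, if z = y then 0 else g z * ∑ k ∈ Finset.range m, f k z) =
      ∑ k ∈ Finset.range m, ∑' z, if z = y then 0 else g z * f k z := by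
  rw [← Summable.tsum_finsetSum fun _ _ => ENNReal.summable]
  congr 1; ext z
  split
  · simp
  · rw [Finset.mul_sum]

/-- first-passage decomposition (upper bound direction). -/
lemma nStep_le_fp (n : ℕ) (x y : G) :
    nStep lam kappa (n+1) x y ≤
      ∑ k ∈ Finset.range (n+1), hitK lam kappa k x y * nStep lam kappa (n-k) y y := by
  induction n generalizing x with
  | zero =>
    rw [Finset.range_one, Finset.sum_singleton, nStep_one, hitK_zero, nStep_zero]
    simp
  | succ n ih =>
    have hsplit : nStep lam kappa (n+1+1) x y =
        transStep lam kappa x y * nStep lam kappa (n+1) y y +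
          ∑' z, if z = y then 0 else transStep lam kappa x z * nStep lam kappa (n+1) z y := by
      rw [nStep_succ_left]
      exact ENNReal.tsum_eq_add_tsum_ite y
    rw [hsplit]
    have h2 : (∑' z, if z = y then 0 else
          transStep lam kappa x z * nStep lam kappa (n+1) z y) ≤
        ∑ k ∈ Finset.range (n+1), hitK lam kappa (k+1) x y * nStep lam kappa (n-k) y y := by
      calc (∑' z, if z = y then 0 else
              transStep lam kappa x z * nStep lam kappa (n+1) z y)
          ≤ ∑' z, if z = y then 0 else transStep lam kappa x z *
              ∑ k ∈ Finset.range (n+1), hitK lam kappa k z y * nStep lam kappa (n-k) y y := by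
            refine ENNReal.tsum_le_tsum fun z => ?_
            split
            · exact le_rfl
            · exact mul_le_mul_right (ih z) _
        _ = ∑ k ∈ Finset.range (n+1), ∑' z, if z = y then 0 else transStep lam kappa x z *
              (hitK lam kappa k z y * nStep lam kappa (n-k) y y) := by
            exact tsum_ite_sum_comm y (n+1) _ _
        _ = ∑ k ∈ Finset.range (n+1), hitK lam kappa (k+1) x y * nStep lam kappa (n-k) y y := by
            refine Finset.sum_congr rfl fun k _ => ?_
            rw [hitK_succ_mul]
    calc transStep lam kappa x y * nStep lam kappa (n+1) y y +
          (∑' z, if z = y then 0 else transStep lam kappa x z * nStep lam kappa (n+1) z y)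
        ≤ hitK lam kappa 0 x y * nStep lam kappa (n+1) y y +
          ∑ k ∈ Finset.range (n+1), hitK lam kappa (k+1) x y * nStep lam kappa (n-k) y y := by
          exact add_le_add_right h2 _
      _ = ∑ k ∈ Finset.range (n+2), hitK lam kappa k x y * nStep lam kappa (n+1-k) y y := by
          conv_rhs => rw [Finset.sum_range_succ']
          rw [add_comm]
          congr 1
          · exact Finset.sum_congr rfl fun k hk => by congr 2; omega

/-- disjointness of first-passage classes (lower bound direction), general target `w`. -/
lemma fp_le_nStep (n : ℕ) (x y w : G) :
    (∑ k ∈ Finset.range (n+1), hitK lam kappa k x y * nStep lam kappa (n-k) y w) ≤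
      nStep lam kappa (n+1) x w := by
  induction n generalizing x with
  | zero =>
    rw [Finset.range_one, Finset.sum_singleton, nStep_one, hitK_zero, nStep_zero]
    split
    · next h => subst h; simp
    · simp
  | succ n ih =>
    have hsplit : nStep lam kappa (n+1+1) x w =
        transStep lam kappa x y * nStep lam kappa (n+1) y w +
          ∑' z, if z = y then 0 else transStep lam kappa x z * nStep lam kappa (n+1) z w := by
      rw [nStep_succ_left]
      exact ENNReal.tsum_eq_add_tsum_ite y
    rw [Finset.sum_range_succ']
    have h1 : (∑ k ∈ Finset.range (n+1),
          hitK lam kappa (k+1) x y * nStep lam kappa (n+1-(k+1)) y w) ≤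
        ∑' z, if z = y then 0 else transStep lam kappa x z * nStep lam kappa (n+1) z w := by
      have hrw : (∑ k ∈ Finset.range (n+1),
            hitK lam kappa (k+1) x y * nStep lam kappa (n+1-(k+1)) y w) =
          ∑' z, if z = y then 0 else transStep lam kappa x z *
            ∑ k ∈ Finset.range (n+1), hitK lam kappa k z y * nStep lam kappa (n-k) y w := by
        rw [tsum_ite_sum_comm]
        refine Finset.sum_congr rfl fun k hk => ?_
        rw [show n+1-(k+1) = n-k by omega, hitK_succ_mul]
      rw [hrw]
      refine ENNReal.tsum_le_tsum fun z => ?_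
      split
      · exact le_rfl
      · exact mul_le_mul_right (ih z) _
    calc (∑ k ∈ Finset.range (n+1),
            hitK lam kappa (k+1) x y * nStep lam kappa (n+1-(k+1)) y w) +
          hitK lam kappa 0 x y * nStep lam kappa (n+1-0) y w
        ≤ (∑' z, if z = y then 0 else transStep lam kappa x z * nStep lam kappa (n+1) z w) +
            transStep lam kappa x y * nStep lam kappa (n+1) y w := by
          exact add_le_add h1 le_rfl
      _ = nStep lam kappa (n+1+1) x w := by rw [hsplit, add_comm]

end Aux2

section Aux3
variable {G : Type*} (lam : G → G → ℝ) (kappa : G → ℝ)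

lemma ofReal_lamTot_mul_transStep (hpos : ∀ x, 0 < lamTot lam kappa x) (x y : G) :
    ENNReal.ofReal (lamTot lam kappa x) * transStep lam kappa x y =
      ENNReal.ofReal (lam x y) := by
  rw [transStep, ← ENNReal.ofReal_mul (hpos x).le, mul_comm (lamTot lam kappa x),
    div_mul_cancel₀ _ (hpos x).ne']

lemma nStep_balance (hsymm : ∀ x y, lam x y = lam y x)
    (hpos : ∀ x, 0 < lamTot lam kappa x) (n : ℕ) (x y : G) :
    ENNReal.ofReal (lamTot lam kappa x) * nStep lam kappa n x y =
      ENNReal.ofReal (lamTot lam kappa y) * nStep lam kappa n y x := by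
  induction n generalizing x y with
  | zero =>
    rw [nStep_zero, nStep_zero]
    by_cases h : x = y
    · subst h; rfl
    · simp [h, Ne.symm h]
  | succ n ih =>
    rw [nStep_succ, nStep_succ_left lam kappa n y x]
    calc ENNReal.ofReal (lamTot lam kappa x) *
          ∑' z, nStep lam kappa n x z * transStep lam kappa z y
        = ∑' z, (ENNReal.ofReal (lamTot lam kappa x) * nStep lam kappa n x z) *
            transStep lam kappa z y := by
          rw [← ENNReal.tsum_mul_left]; congr 1; ext z; ring
      _ = ∑' z, (ENNReal.ofReal (lamTot lam kappa z) * nStep lam kappa n z x) *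
            transStep lam kappa z y := by
          congr 1; ext z; rw [ih]
      _ = ∑' z, nStep lam kappa n z x *
            (ENNReal.ofReal (lamTot lam kappa z) * transStep lam kappa z y) := by
          congr 1; ext z; ring
      _ = ∑' z, nStep lam kappa n z x * ENNReal.ofReal (lam y z) := by
          congr 1; ext z; rw [ofReal_lamTot_mul_transStep lam kappa hpos, hsymm]
      _ = ∑' z, nStep lam kappa n z x *
            (ENNReal.ofReal (lamTot lam kappa y) * transStep lam kappa y z) := by
          congr 1; ext z; rw [ofReal_lamTot_mul_transStep lam kappa hpos]
      _ = ENNReal.ofReal (lamTot lam kappa y) *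
            ∑' z, transStep lam kappa y z * nStep lam kappa n z x := by
          rw [← ENNReal.tsum_mul_left]; congr 1; ext z; ring

lemma green_symm (hsymm : ∀ x y, lam x y = lam y x)
    (hpos : ∀ x, 0 < lamTot lam kappa x) (x y : G) :
    greenFn lam kappa x y = greenFn lam kappa y x := by
  have hb : ENNReal.ofReal (lamTot lam kappa x) * ∑' n, nStep lam kappa n x y =
      ENNReal.ofReal (lamTot lam kappa y) * ∑' n, nStep lam kappa n y x := by
    rw [← ENNReal.tsum_mul_left, ← ENNReal.tsum_mul_left]
    exact tsum_congr fun n => nStep_balance lam kappa hsymm hpos n x y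
  have hx0 : (ENNReal.ofReal (lamTot lam kappa x)) ≠ 0 :=
    (ENNReal.ofReal_pos.mpr (hpos x)).ne'
  have hy0 : (ENNReal.ofReal (lamTot lam kappa y)) ≠ 0 :=
    (ENNReal.ofReal_pos.mpr (hpos y)).ne'
  have hxt : (ENNReal.ofReal (lamTot lam kappa x)) ≠ ⊤ := ENNReal.ofReal_ne_top
  have hyt : (ENNReal.ofReal (lamTot lam kappa y)) ≠ ⊤ := ENNReal.ofReal_ne_top
  unfold greenFn
  have : (∑' n, nStep lam kappa n x y) = (ENNReal.ofReal (lamTot lam kappa x))⁻¹ *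
      (ENNReal.ofReal (lamTot lam kappa y) * ∑' n, nStep lam kappa n y x) := by
    rw [← hb, ← mul_assoc, ENNReal.inv_mul_cancel hx0 hxt, one_mul]
  rw [this, ← mul_assoc, ← mul_assoc, mul_comm (ENNReal.ofReal (lamTot lam kappa y))⁻¹,
    mul_assoc _ _ (ENNReal.ofReal (lamTot lam kappa y)),
    mul_comm (ENNReal.ofReal (lamTot lam kappa y))⁻¹,
    ENNReal.mul_inv_cancel hy0 hyt, mul_one]

/-- Cauchy product rearrangement in `ℝ≥0∞`. -/
lemma ennreal_cauchy (a b : ℕ → ℝ≥0∞) :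
    (∑' k, a k) * (∑' l, b l) = ∑' n, ∑ k ∈ Finset.range (n+1), a k * b (n-k) := by
  have h1 : (∑' k, a k) * (∑' l, b l) = ∑' p : ℕ × ℕ, a p.1 * b p.2 := by
    rw [ENNReal.tsum_prod', ← ENNReal.tsum_mul_right]
    refine tsum_congr fun k => ?_
    exact (ENNReal.tsum_mul_left).symm
  rw [h1, ← Finset.HasAntidiagonal.sigmaAntidiagonalEquivProd.tsum_eq (fun p : ℕ × ℕ => a p.1 * b p.2),
    ENNReal.tsum_sigma']
  refine tsum_congr fun n => ?_
  rw [tsum_fintype, ← Finset.Nat.sum_antidiagonal_eq_sum_range_succ_mk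
    (fun kl => a kl.1 * b kl.2)]
  exact Finset.sum_coe_sort (Finset.HasAntidiagonal.antidiagonal n) (fun kl => a kl.1 * b kl.2)

lemma green_le_F_mul (hpos : ∀ x, 0 < lamTot lam kappa x) (x y : G) (hne : x ≠ y) :
    greenFn lam kappa x y ≤ (∑' k, hitK lam kappa k x y) * greenFn lam kappa y y := by
  unfold greenFn
  rw [mul_comm (∑' k, hitK lam kappa k x y), mul_assoc]
  refine mul_le_mul_right ?_ _
  calc (∑' n, nStep lam kappa n x y)
      = nStep lam kappa 0 x y + ∑' n, nStep lam kappa (n+1) x y :=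
        tsum_eq_zero_add' ENNReal.summable
    _ = ∑' n, nStep lam kappa (n+1) x y := by rw [nStep_zero]; simp [hne]
    _ ≤ ∑' n, ∑ k ∈ Finset.range (n+1),
          hitK lam kappa k x y * nStep lam kappa (n-k) y y :=
        ENNReal.tsum_le_tsum fun n => nStep_le_fp lam kappa n x y
    _ = (∑' k, hitK lam kappa k x y) * ∑' l, nStep lam kappa l y y :=
        (ennreal_cauchy (fun k => hitK lam kappa k x y)
          (fun l => nStep lam kappa l y y)).symm
    _ = (∑' l, nStep lam kappa l y y) * ∑' k, hitK lam kappa k x y := mul_comm _ _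

lemma FF_le_tail (m : ℕ) (x y : G) (hy : y ≠ x)
    (h0 : ∀ k < m, hitK lam kappa k x y = 0) :
    (∑' k, hitK lam kappa k x y) * (∑' l, hitK lam kappa l y x)
      ≤ ∑' i, nStep lam kappa (i + m + 2) x x := by
  calc (∑' k, hitK lam kappa k x y) * (∑' l, hitK lam kappa l y x)
      ≤ (∑' k, hitK lam kappa k x y) * (∑' l, nStep lam kappa (l+1) y x) :=
        mul_le_mul_right (ENNReal.tsum_le_tsum fun l => hitK_le lam kappa l y x) _
    _ = ∑' n, ∑ k ∈ Finset.range (n+1),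
          hitK lam kappa k x y * nStep lam kappa ((n-k)+1) y x := ennreal_cauchy _ _
    _ ≤ ∑' n, (if n < m then 0 else nStep lam kappa (n+2) x x) := by
        refine ENNReal.tsum_le_tsum fun n => ?_
        split
        · next h =>
          have : ∀ k ∈ Finset.range (n+1), hitK lam kappa k x y *
              nStep lam kappa ((n-k)+1) y x = 0 := by
            intro k hk
            rw [h0 k (by simp at hk; omega), zero_mul]
          rw [Finset.sum_congr rfl this, Finset.sum_const, smul_zero]
        · next h =>
          have hre : (∑ k ∈ Finset.range (n+1),
              hitK lam kappa k x y * nStep lam kappa ((n-k)+1) y x) =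
              ∑ k ∈ Finset.range (n+1),
                hitK lam kappa k x y * nStep lam kappa (n+1-k) y x := by
            refine Finset.sum_congr rfl fun k hk => ?_
            congr 2
            simp at hk
            omega
          rw [hre]
          calc (∑ k ∈ Finset.range (n+1),
                hitK lam kappa k x y * nStep lam kappa (n+1-k) y x)
              ≤ ∑ k ∈ Finset.range (n+2),
                  hitK lam kappa k x y * nStep lam kappa (n+1-k) y x :=
                Finset.sum_le_sum_of_subset (Finset.range_subset_range.mpr (by omega))
            _ ≤ nStep lam kappa (n+2) x x := fp_le_nStep lam kappa (n+1) x y x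
    _ = ∑' i, nStep lam kappa (i + m + 2) x x := by
        rw [← Summable.sum_add_tsum_nat_add' (f := fun n => if n < m then 0
            else nStep lam kappa (n+2) x x) (k := m) ENNReal.summable]
        have h1 : (∑ n ∈ Finset.range m,
            if n < m then (0:ℝ≥0∞) else nStep lam kappa (n+2) x x) = 0 := by
          refine Finset.sum_eq_zero fun n hn => ?_
          simp at hn
          simp [hn]
        rw [h1, zero_add]
        refine tsum_congr fun i => ?_
        rw [if_neg (by omega)]

end Aux3

/-- set of points reachable from `x0` within `n` steps in the induced graph. -/
def reachSet {G : Type*} (lam : G → G → ℝ) (x0 : G) : ℕ → Set G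
  | 0 => {x0}
  | n+1 => reachSet lam x0 n ∪ ⋃ z ∈ reachSet lam x0 n, {y | 0 < lam z y}

section Aux4
variable {G : Type*} (lam : G → G → ℝ) (kappa : G → ℝ)

lemma reachSet_finite (hdiag : ∀ x, lam x x = 0)
    (hlocfin : ∀ v : G, ((inducedGraph lam).neighborSet v).Finite) (x0 : G) :
    ∀ n, (reachSet lam x0 n).Finite := by
  intro n
  induction n with
  | zero => exact Set.finite_singleton x0
  | succ n ih =>
    refine ih.union (Set.Finite.biUnion ih fun z _ => ?_)
    refine (hlocfin z).subset fun y hy => ?_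
    have hzy : 0 < lam z y := hy
    have hne : z ≠ y := by
      intro h; subst h; rw [hdiag z] at hzy; exact lt_irrefl 0 hzy
    show (inducedGraph lam).Adj z y
    rw [inducedGraph, SimpleGraph.fromRel_adj]
    exact ⟨hne, Or.inl hzy⟩

lemma reachSet_subset_succ (x0 : G) (n : ℕ) :
    reachSet lam x0 n ⊆ reachSet lam x0 (n+1) := fun y hy => Or.inl hy

lemma reachSet_mono (x0 : G) {s m : ℕ} (h : s ≤ m) :
    reachSet lam x0 s ⊆ reachSet lam x0 m := by
  induction m with
  | zero => rw [Nat.le_zero.mp h]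
  | succ m ih =>
    rcases Nat.lt_or_ge s (m+1) with h' | h'
    · exact (ih (by omega)).trans (reachSet_subset_succ lam x0 m)
    · rw [show s = m+1 by omega]

lemma nStep_reach (hpos : ∀ x, 0 < lamTot lam kappa x) (x0 : G) (s : ℕ) (y : G)
    (h : nStep lam kappa s x0 y ≠ 0) : y ∈ reachSet lam x0 s := by
  induction s generalizing y with
  | zero =>
    rw [nStep_zero] at h
    by_cases hxy : x0 = y
    · subst hxy; exact rfl
    · rw [if_neg hxy] at h; exact absurd rfl h
  | succ s ih =>
    rw [nStep_succ] at h
    have : ∃ z, nStep lam kappa s x0 z * transStep lam kappa z y ≠ 0 := by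
      by_contra hc
      push_neg at hc
      exact h (ENNReal.tsum_eq_zero.mpr hc)
    obtain ⟨z, hz⟩ := this
    have h1 : nStep lam kappa s x0 z ≠ 0 := fun h' => hz (by rw [h', zero_mul])
    have h2 : transStep lam kappa z y ≠ 0 := fun h' => hz (by rw [h', mul_zero])
    have hz' : z ∈ reachSet lam x0 s := ih z h1
    have hpos' : 0 < lam z y := by
      rw [transStep, Ne, ENNReal.ofReal_eq_zero, not_le] at h2
      rcases div_pos_iff.mp h2 with ⟨h3, _⟩ | ⟨_, h4⟩
      · exact h3
      · exact absurd (hpos z) (by linarith)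
    right
    exact Set.mem_biUnion hz' hpos'

lemma hitK_vanish (hpos : ∀ x, 0 < lamTot lam kappa x) (x0 : G) (m : ℕ) (y : G)
    (hy : y ∉ reachSet lam x0 m) : ∀ k < m, hitK lam kappa k x0 y = 0 := by
  intro k hk
  have h1 : nStep lam kappa (k+1) x0 y = 0 := by
    by_contra h
    exact hy (reachSet_mono lam x0 (by omega : k+1 ≤ m) (nStep_reach lam kappa hpos x0 (k+1) y h))
  have := hitK_le lam kappa k x0 y
  rw [h1] at this
  exact le_antisymm this zero_le

end Aux4

section Aux5
variable {G : Type*} (lam : G → G → ℝ) (kappa : G → ℝ)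

lemma green_pos_ne_zero (x : G) : greenFn lam kappa x x ≠ 0 := by
  rw [greenFn]
  refine mul_ne_zero ?_ ?_
  · rw [Ne, ENNReal.inv_eq_zero]
    exact ENNReal.ofReal_ne_top
  · have h1 : (1:ℝ≥0∞) ≤ ∑' n, nStep lam kappa n x x := by
      have := ENNReal.le_tsum (f := fun n => nStep lam kappa n x x) 0
      rw [nStep_zero, if_pos rfl] at this
      exact this
    intro h
    rw [h] at h1
    exact absurd h1 (by simp)

lemma tsum_nStep_ne_top (hpos : ∀ x, 0 < lamTot lam kappa x) (x : G)
    (ht : greenFn lam kappa x x < ⊤) : (∑' n, nStep lam kappa n x x) ≠ ⊤ := by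
  intro h
  rw [greenFn, h, ENNReal.mul_top] at ht
  · exact absurd ht (lt_irrefl _)
  · rw [Ne, ENNReal.inv_eq_zero]
    exact ENNReal.ofReal_ne_top

/-- Main smallness lemma: off a finite set, the Green function from `x0` is small on `A`. -/
lemma green_small (hsymm : ∀ x y, lam x y = lam y x) (hdiag : ∀ x, lam x x = 0)
    (hpos : ∀ x, 0 < lamTot lam kappa x)
    (hlocfin : ∀ v : G, ((inducedGraph lam).neighborSet v).Finite)
    (htransient : ∀ x, greenFn lam kappa x x < ⊤)
    (A : Set G) (g₀ : ℝ) (hg₀ : 0 < g₀)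
    (hbound : ∀ x ∈ A, greenFn lam kappa x x ≤ ENNReal.ofReal g₀)
    (x0 : G) (η : ℝ) (hη : 0 < η) :
    ∃ S : Set G, S.Finite ∧ x0 ∈ S ∧
      ∀ y ∈ A, y ∉ S → greenFn lam kappa x0 y ≤ ENNReal.ofReal η := by
  classical
  set c : ℝ≥0∞ := ENNReal.ofReal g₀ * greenFn lam kappa x0 x0 with hc
  have hc0 : c ≠ 0 := mul_ne_zero (by simp [ENNReal.ofReal_eq_zero]; linarith)
    (green_pos_ne_zero lam kappa x0)
  have hctop : c ≠ ⊤ := ENNReal.mul_ne_top ENNReal.ofReal_ne_top (htransient x0).ne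
  set θ : ℝ≥0∞ := ENNReal.ofReal η * ENNReal.ofReal η / c with hθ
  have hθ0 : 0 < θ := ENNReal.div_pos
    (mul_ne_zero (by simp [ENNReal.ofReal_eq_zero]; linarith)
      (by simp [ENNReal.ofReal_eq_zero]; linarith)) hctop
  have htail := ENNReal.tendsto_sum_nat_add (fun n => nStep lam kappa n x0 x0)
    (tsum_nStep_ne_top lam kappa hpos x0 (htransient x0))
  have hev := (htail.eventually (gt_mem_nhds hθ0)).exists_forall_of_atTop
  obtain ⟨M, hM⟩ := hev
  set m := M
  refine ⟨reachSet lam x0 m, reachSet_finite lam hdiag hlocfin x0 m, ?_, ?_⟩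
  · exact reachSet_mono lam x0 (Nat.zero_le m) rfl
  intro y hyA hyS
  have hx0mem : x0 ∈ reachSet lam x0 m := reachSet_mono lam x0 (Nat.zero_le m) rfl
  have hyx : y ≠ x0 := by
    intro h; rw [h] at hyS; exact hyS hx0mem
  have h0 : ∀ k < m, hitK lam kappa k x0 y = 0 := hitK_vanish lam kappa hpos x0 m y hyS
  have hFF : (∑' k, hitK lam kappa k x0 y) * (∑' l, hitK lam kappa l y x0)
      ≤ ∑' i, nStep lam kappa (i + m + 2) x0 x0 :=
    FF_le_tail lam kappa m x0 y hyx h0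
  have htail2 : (∑' i, nStep lam kappa (i + m + 2) x0 x0) < θ := by
    have h1 : (∑' i, nStep lam kappa (i + m + 2) x0 x0) =
        ∑' i, nStep lam kappa (i + (m + 2)) x0 x0 := by
      exact tsum_congr fun i => by rw [Nat.add_assoc]
    rw [h1]
    exact hM (m+2) (by omega)
  have hkey : greenFn lam kappa x0 y * greenFn lam kappa x0 y ≤
      ENNReal.ofReal η * ENNReal.ofReal η := by
    calc greenFn lam kappa x0 y * greenFn lam kappa x0 y
        = greenFn lam kappa x0 y * greenFn lam kappa y x0 := by
          rw [green_symm lam kappa hsymm hpos x0 y]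
      _ ≤ ((∑' k, hitK lam kappa k x0 y) * greenFn lam kappa y y) *
          ((∑' l, hitK lam kappa l y x0) * greenFn lam kappa x0 x0) :=
          mul_le_mul' (green_le_F_mul lam kappa hpos x0 y (Ne.symm hyx))
            (green_le_F_mul lam kappa hpos y x0 hyx)
      _ = ((∑' k, hitK lam kappa k x0 y) * (∑' l, hitK lam kappa l y x0)) *
          (greenFn lam kappa y y * greenFn lam kappa x0 x0) := by ring
      _ ≤ (∑' i, nStep lam kappa (i + m + 2) x0 x0) *
          (ENNReal.ofReal g₀ * greenFn lam kappa x0 x0) :=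
          mul_le_mul' hFF (mul_le_mul_left (hbound y hyA) _)
      _ ≤ θ * c := mul_le_mul' htail2.le le_rfl
      _ = ENNReal.ofReal η * ENNReal.ofReal η := ENNReal.div_mul_cancel hc0 hctop
  by_contra hcon
  push_neg at hcon
  have hη0 : (ENNReal.ofReal η) ≠ 0 := by simp [ENNReal.ofReal_eq_zero]; linarith
  have : ENNReal.ofReal η * ENNReal.ofReal η < greenFn lam kappa x0 y * greenFn lam kappa x0 y :=
    calc ENNReal.ofReal η * ENNReal.ofReal η
        < greenFn lam kappa x0 y * ENNReal.ofReal η :=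
          ENNReal.mul_lt_mul_left hη0 ENNReal.ofReal_ne_top hcon
      _ ≤ greenFn lam kappa x0 y * greenFn lam kappa x0 y := mul_le_mul_right hcon.le _
  exact absurd hkey (not_le.mpr this)

end Aux5

section Aux6
variable {G : Type*} (lam : G → G → ℝ) (kappa : G → ℝ)

lemma exists_good_finset (hsymm : ∀ x y, lam x y = lam y x) (hdiag : ∀ x, lam x x = 0)
    (hpos : ∀ x, 0 < lamTot lam kappa x)
    (hlocfin : ∀ v : G, ((inducedGraph lam).neighborSet v).Finite)
    (htransient : ∀ x, greenFn lam kappa x x < ⊤)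
    (A : Set G) (hA : A.Infinite) (g₀ : ℝ) (hg₀ : 0 < g₀)
    (hbound : ∀ x ∈ A, greenFn lam kappa x x ≤ ENNReal.ofReal g₀)
    (η : ℝ) (hη : 0 < η) (N : ℕ) :
    ∃ F : Finset G, F.card = N ∧ ↑F ⊆ A ∧
      ∀ x ∈ F, ∀ y ∈ F, x ≠ y → greenFn lam kappa x y ≤ ENNReal.ofReal η := by
  classical
  induction N with
  | zero => exact ⟨∅, by simp⟩
  | succ N ih =>
    obtain ⟨F, hcard, hFA, hgood⟩ := ih
    choose S hSfin hSmem hSsmall using fun x : G =>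
      green_small lam kappa hsymm hdiag hpos hlocfin htransient A g₀ hg₀ hbound x η hη
    have hTfin : (↑F ∪ ⋃ x ∈ F, S x : Set G).Finite :=
      F.finite_toSet.union (Set.Finite.biUnion F.finite_toSet fun x _ => hSfin x)
    obtain ⟨y, hyA, hyT⟩ := (hA.diff hTfin).nonempty
    have hyF : y ∉ F := fun h => hyT (Or.inl h)
    refine ⟨insert y F, ?_, ?_, ?_⟩
    · rw [Finset.card_insert_of_notMem hyF, hcard]
    · intro z hz
      rcases Finset.mem_insert.mp hz with h | h
      · rwa [h]
      · exact hFA h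
    · intro a ha b hb hab
      rcases Finset.mem_insert.mp ha with ha' | ha' <;>
        rcases Finset.mem_insert.mp hb with hb' | hb'
      · exact absurd (ha'.trans hb'.symm) hab
      · -- a = y, b ∈ F : g y b = g b y ≤ η since y ∉ S b
        subst ha'
        rw [green_symm lam kappa hsymm hpos]
        refine hSsmall b a hyA fun h => hyT (Or.inr ?_)
        exact Set.mem_biUnion hb' h
      · subst hb'
        refine hSsmall a b hyA fun h => hyT (Or.inr ?_)
        exact Set.mem_biUnion ha' h
      · exact hgood a ha' b hb' hab

end Aux6

/-- Lemma A.2 of the paper (criterion for infinite capacity): if `A ⊆ G` is infinite and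
`g(x,x) ≤ g₀` for all `x ∈ A`, then `A` has infinite capacity, i.e. for every `ε > 0` there
is a finite nonempty `F ⊆ A` and a probability vector `μ` on `F` whose energy
`Σ_{x,y ∈ F} g(x,y) μ(x) μ(y)` is at most `ε`. -/
theorem infinite_capacity_criterion {G : Type*} [Countable G] [Infinite G]
    (lam : G → G → ℝ) (kappa : G → ℝ)
    (hsymm : ∀ x y, lam x y = lam y x)
    (hnonneg : ∀ x y, 0 ≤ lam x y)
    (hdiag : ∀ x, lam x x = 0)
    (hkappa : ∀ x, 0 ≤ kappa x)
    (hsum : ∀ x, Summable (fun y => lam x y))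
    (hpos : ∀ x, 0 < lamTot lam kappa x)
    (hconn : (inducedGraph lam).Connected)
    (hlocfin : ∀ v : G, ((inducedGraph lam).neighborSet v).Finite)
    (htransient : ∀ x, greenFn lam kappa x x < ⊤)
    (A : Set G) (hA : A.Infinite)
    (g₀ : ℝ) (hg₀ : 0 < g₀)
    (hbound : ∀ x ∈ A, greenFn lam kappa x x ≤ ENNReal.ofReal g₀) :
    ∀ ε : ℝ, 0 < ε → ∃ F : Finset G, F.Nonempty ∧ ↑F ⊆ A ∧
      ∃ μ : G → ℝ, (∀ x, 0 ≤ μ x) ∧ (∀ x, x ∉ F → μ x = 0) ∧ (∑ x ∈ F, μ x = 1) ∧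
        ∑ x ∈ F, ∑ y ∈ F, greenFn lam kappa x y * ENNReal.ofReal (μ x * μ y) ≤
          ENNReal.ofReal ε := by
  classical
  intro ε hε
  have hε2 : (0:ℝ) < ε/2 := by linarith
  obtain ⟨N, hN⟩ := exists_nat_gt (g₀ / (ε/2))
  have hNR : (0:ℝ) < N := lt_trans (div_pos hg₀ hε2) hN
  have hN1 : 0 < N := by exact_mod_cast hNR
  have hN0 : (N:ℝ) ≠ 0 := ne_of_gt hNR
  obtain ⟨F, hcard, hFA, hgood⟩ := exists_good_finset lam kappa hsymm hdiag hpos hlocfin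
    htransient A hA g₀ hg₀ hbound (ε/2) hε2 N
  set t : ℝ := ((N:ℝ))⁻¹ with ht
  have htpos : 0 < t := inv_pos.mpr hNR
  have htN : (N:ℝ) * t = 1 := mul_inv_cancel₀ hN0
  set μ : G → ℝ := fun x => if x ∈ F then t else 0 with hμdef
  refine ⟨F, Finset.card_pos.mp (hcard ▸ hN1), hFA, μ, ?_, ?_, ?_, ?_⟩
  · intro x
    by_cases h : x ∈ F <;> simp [hμdef, h, htpos.le]
  · intro x hx
    simp [hμdef, hx]
  · calc ∑ x ∈ F, μ x = ∑ x ∈ F, t := Finset.sum_congr rfl fun x hx => by simp [hμdef, hx]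
      _ = F.card • t := (Finset.sum_const t)
      _ = 1 := by rw [hcard, nsmul_eq_mul, htN]
  · set a : ℝ≥0∞ := ENNReal.ofReal (g₀ * (t*t)) with ha
    set b : ℝ≥0∞ := ENNReal.ofReal ((ε/2) * (t*t)) with hb
    have hterm : ∀ x ∈ F, ∀ y ∈ F,
        greenFn lam kappa x y * ENNReal.ofReal (μ x * μ y) ≤ if x = y then a else b := by
      intro x hx y hy
      have hμ : μ x * μ y = t * t := by simp [hμdef, hx, hy]
      rw [hμ]
      split
      · next h =>
        subst h
        calc greenFn lam kappa x x * ENNReal.ofReal (t*t)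
            ≤ ENNReal.ofReal g₀ * ENNReal.ofReal (t*t) :=
              mul_le_mul_left (hbound x (hFA hx)) _
          _ = a := (ENNReal.ofReal_mul hg₀.le).symm
      · next h =>
        calc greenFn lam kappa x y * ENNReal.ofReal (t*t)
            ≤ ENNReal.ofReal (ε/2) * ENNReal.ofReal (t*t) :=
              mul_le_mul_left (hgood x hx y hy h) _
          _ = b := (ENNReal.ofReal_mul hε2.le).symm
    have hrow : ∀ x ∈ F, (∑ y ∈ F, if x = y then a else b) ≤ a + (N:ℝ≥0∞) * b := by
      intro x hx
      rw [← Finset.add_sum_erase F _ hx, if_pos rfl]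
      have he : ∑ y ∈ F.erase x, (if x = y then a else b) = (F.erase x).card • b := by
        rw [Finset.sum_congr rfl fun y hy =>
          if_neg (fun h => (Finset.mem_erase.mp hy).1 h.symm), Finset.sum_const]
      rw [he, nsmul_eq_mul]
      refine add_le_add_right (mul_le_mul_left ?_ b) a
      exact_mod_cast Nat.cast_le.mpr (hcard ▸ Finset.card_erase_le (s := F) (a := x))
    have hNa : (N:ℝ≥0∞) * a ≤ ENNReal.ofReal (ε/2) := by
      rw [ha, ← ENNReal.ofReal_natCast N, ← ENNReal.ofReal_mul (Nat.cast_nonneg N)]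
      refine ENNReal.ofReal_le_ofReal ?_
      have e1 : (N:ℝ) * (g₀*(t*t)) = g₀ * t := by
        calc (N:ℝ) * (g₀*(t*t)) = ((N:ℝ)*t)*(g₀*t) := by ring
          _ = g₀ * t := by rw [htN, one_mul]
      rw [e1]
      have hlt : g₀ < (N:ℝ) * (ε/2) := (div_lt_iff₀ hε2).mp hN
      calc g₀ * t ≤ ((N:ℝ) * (ε/2)) * t := mul_le_mul_of_nonneg_right hlt.le htpos.le
        _ = (ε/2) * ((N:ℝ) * t) := by ring
        _ = ε/2 := by rw [htN, mul_one]
    have hNNb : (N:ℝ≥0∞) * ((N:ℝ≥0∞) * b) ≤ ENNReal.ofReal (ε/2) := by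
      rw [hb, ← ENNReal.ofReal_natCast N, ← ENNReal.ofReal_mul (Nat.cast_nonneg N),
        ← ENNReal.ofReal_mul (Nat.cast_nonneg N)]
      refine ENNReal.ofReal_le_ofReal (le_of_eq ?_)
      calc (N:ℝ) * ((N:ℝ) * ((ε/2)*(t*t))) = ((N:ℝ)*t)*((N:ℝ)*t)*(ε/2) := by ring
        _ = ε/2 := by rw [htN]; ring
    calc ∑ x ∈ F, ∑ y ∈ F, greenFn lam kappa x y * ENNReal.ofReal (μ x * μ y)
        ≤ ∑ x ∈ F, ∑ y ∈ F, (if x = y then a else b) :=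
          Finset.sum_le_sum fun x hx => Finset.sum_le_sum fun y hy => hterm x hx y hy
      _ ≤ ∑ x ∈ F, (a + (N:ℝ≥0∞) * b) := Finset.sum_le_sum fun x hx => hrow x hx
      _ = F.card • (a + (N:ℝ≥0∞) * b) := Finset.sum_const _
      _ = (N:ℝ≥0∞) * (a + (N:ℝ≥0∞) * b) := by rw [hcard, nsmul_eq_mul]
      _ = (N:ℝ≥0∞) * a + (N:ℝ≥0∞) * ((N:ℝ≥0∞) * b) := by rw [mul_add]
      _ ≤ ENNReal.ofReal (ε/2) + ENNReal.ofReal (ε/2) := add_le_add hNa hNNb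
      _ = ENNReal.ofReal ε := by
          rw [← ENNReal.ofReal_add hε2.le hε2.le]
          norm_num
end

section
/- Let g > 0 and h ∈ ℝ, and let μ be a finite Borel measure on ℝ with μ((−∞,0)) = 0 such that for every u ≥ 0, ∫_ℝ e^{−u t} dμ(t) = N(0,g)([√(2u + h²), ∞)). Then μ is absolutely continuous with respect to Lebesgue measure with density ρ_h; that is, μ equals the measure with density ρ_h with respect to Lebesgue measure on ℝ. -/
open MeasureTheory Real ProbabilityTheory

namespace LaplaceAuxLemmas

open Set Filter Polynomial
open scoped Pointwise NNReal ENNReal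


lemma integrableOn_exp_div_sqrt {r : ℝ} (hr : 0 < r) :
    IntegrableOn (fun s : ℝ => Real.exp (-(r * s)) / Real.sqrt s) (Ioi 0) := by
  have h1 := integrableOn_rpow_mul_exp_neg_mul_rpow (s := -(1/2)) (p := 1) (b := r)
      (by norm_num) (by norm_num) hr
  refine h1.congr_fun (fun x hx => ?_) measurableSet_Ioi
  beta_reduce
  rw [Real.rpow_one, Real.rpow_neg (le_of_lt hx), ← Real.sqrt_eq_rpow, neg_mul,
    div_eq_mul_inv, mul_comm]

lemma integral_exp_div_sqrt {r : ℝ} (hr : 0 < r) :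
    ∫ s in Ioi (0:ℝ), Real.exp (-(r * s)) / Real.sqrt s = Real.sqrt π / Real.sqrt r := by
  have h1 := Real.integral_rpow_mul_exp_neg_mul_Ioi (a := 1/2) (r := r) (by norm_num) hr
  rw [Real.Gamma_one_half_eq] at h1
  have h2 : ∀ x ∈ Ioi (0:ℝ), x ^ (1/2 - 1 : ℝ) * Real.exp (-(r * x))
      = Real.exp (-(r * x)) / Real.sqrt x := by
    intro x hx
    rw [show (1/2 - 1 : ℝ) = -(1/2) by norm_num, Real.rpow_neg hx.le, ← Real.sqrt_eq_rpow]
    ring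
  rw [setIntegral_congr_fun measurableSet_Ioi h2] at h1
  rw [h1, one_div, ← Real.sqrt_eq_rpow, Real.sqrt_inv]
  ring

lemma image_add_Ioi (c : ℝ) : (fun s : ℝ => s + c) '' Ioi 0 = Ioi c := by
  rw [Set.image_add_const_Ioi, zero_add]

lemma hasDeriv_add (c a : ℝ) : ∀ x ∈ Ioi a, HasDerivWithinAt (fun s : ℝ => s + c) 1 (Ioi a) x :=
  fun x _ => (hasDerivWithinAt_id x _).add_const c

lemma integral_translate (c : ℝ) (F : ℝ → ℝ) :
    ∫ t in Ioi c, F t = ∫ s in Ioi (0:ℝ), F (s + c) := by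
  rw [← image_add_Ioi c, integral_image_eq_integral_abs_deriv_smul measurableSet_Ioi
    (hasDeriv_add c 0) (fun x _ y _ hxy => by linarith [add_right_cancel hxy])]
  simp

lemma integrableOn_translate {c : ℝ} {F : ℝ → ℝ}
    (hF : IntegrableOn (fun s => F (s + c)) (Ioi (0:ℝ))) : IntegrableOn F (Ioi c) := by
  rw [← image_add_Ioi c,
    integrableOn_image_iff_integrableOn_abs_deriv_smul measurableSet_Ioi
      (hasDeriv_add c 0) (fun x _ y _ hxy => by linarith [add_right_cancel hxy])]
  simpa using hF

lemma integral_exp_neg_mul_Ioi' {t : ℝ} (ht : 0 < t) (u : ℝ) :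
    ∫ v in Ioi u, Real.exp (-(t * v)) = Real.exp (-(t * u)) / t := by
  have himg : (fun v : ℝ => t * v) '' Ioi u = Ioi (t * u) := by
    rw [show (fun v : ℝ => t * v) '' Ioi u = t • Ioi u from rfl, LinearOrderedField.smul_Ioi ht]
  have h1 : ∫ x in Ioi (t*u), Real.exp (-x) = ∫ v in Ioi u, |t| • Real.exp (-(t*v)) := by
    rw [← himg]
    exact integral_image_eq_integral_abs_deriv_smul measurableSet_Ioi
      (fun x _ => by simpa using (hasDerivWithinAt_id x (Ioi u)).const_mul t)
      (fun x _ y _ hxy => mul_left_cancel₀ ht.ne' hxy) _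
  rw [integral_exp_neg_Ioi] at h1
  simp only [smul_eq_mul, abs_of_pos ht] at h1
  rw [MeasureTheory.integral_const_mul] at h1
  field_simp at h1 ⊢
  linarith

-- placeholders for already-proven lemmas
variable {g : ℝ}

lemma sqrt2pig (hg : 0 < g) : Real.sqrt (2 * π * g) = 2 * Real.sqrt (π * g / 2) := by
  rw [show (2 * π * g : ℝ) = 4 * (π * g / 2) by ring, show (4:ℝ) = 2^2 by norm_num,
    Real.sqrt_mul (by positivity), Real.sqrt_sq (by norm_num)]

lemma B_pointwise (hg : 0 < g) {r : ℝ} (hr : 0 < r) : ∀ s ∈ Ioi (0:ℝ),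
    Real.exp (-(r * (s + g⁻¹))) / (2 * π * Real.sqrt (g * (s + g⁻¹ - g⁻¹)))
      = (Real.exp (-(r * g⁻¹)) / (2 * π * Real.sqrt g)) * (Real.exp (-(r * s)) / Real.sqrt s) := by
  intro s hs
  have hss : Real.sqrt s ≠ 0 := ne_of_gt (Real.sqrt_pos.mpr hs)
  have hsg : Real.sqrt g ≠ 0 := ne_of_gt (Real.sqrt_pos.mpr hg)
  rw [add_sub_cancel_right, Real.sqrt_mul hg.le, mul_add, neg_add, Real.exp_add]
  field_simp

lemma integral_B (hg : 0 < g) {r : ℝ} (hr : 0 < r) :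
    ∫ t in Ioi g⁻¹, Real.exp (-(r * t)) / (2 * π * Real.sqrt (g * (t - g⁻¹)))
      = Real.exp (-(r * g⁻¹)) / (2 * Real.sqrt (π * g * r)) := by
  rw [integral_translate g⁻¹ _, setIntegral_congr_fun measurableSet_Ioi (B_pointwise hg hr),
    MeasureTheory.integral_const_mul, integral_exp_div_sqrt hr]
  have hπ : Real.sqrt π ≠ 0 := ne_of_gt (Real.sqrt_pos.mpr pi_pos)
  have hsg : Real.sqrt g ≠ 0 := ne_of_gt (Real.sqrt_pos.mpr hg)
  have hsr : Real.sqrt r ≠ 0 := ne_of_gt (Real.sqrt_pos.mpr hr)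
  have hππ : Real.sqrt π * Real.sqrt π = π := Real.mul_self_sqrt pi_pos.le
  rw [Real.sqrt_mul (by positivity) r, Real.sqrt_mul pi_pos.le g]
  field_simp
  linear_combination hππ

lemma integrableOn_B (hg : 0 < g) {r : ℝ} (hr : 0 < r) :
    IntegrableOn (fun t => Real.exp (-(r * t)) / (2 * π * Real.sqrt (g * (t - g⁻¹)))) (Ioi g⁻¹) := by
  apply integrableOn_translate
  apply IntegrableOn.congr_fun (((integrableOn_exp_div_sqrt hr).const_mul
    (Real.exp (-(r * g⁻¹)) / (2 * π * Real.sqrt g))))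
    (fun s hs => (B_pointwise hg hr s hs).symm) measurableSet_Ioi

variable {g h u : ℝ}

lemma himg (hh : 0 ≤ 2 * u + h ^ 2) :
    (fun x : ℝ => (x ^ 2 - h ^ 2) / 2) '' Ioi (Real.sqrt (2 * u + h ^ 2)) = Ioi u := by
  set a := Real.sqrt (2 * u + h ^ 2) with ha
  have ha0 : 0 ≤ a := Real.sqrt_nonneg _
  have ha2 : a ^ 2 = 2 * u + h ^ 2 := Real.sq_sqrt hh
  ext v
  constructor
  · rintro ⟨x, hx, rfl⟩
    have hx' : a < x := hx
    have : a ^ 2 < x ^ 2 := by nlinarith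
    simp only [mem_Ioi]
    nlinarith
  · intro hv
    have hv' : u < v := hv
    refine ⟨Real.sqrt (2 * v + h ^ 2), ?_, ?_⟩
    · exact Real.sqrt_lt_sqrt hh (by nlinarith)
    · show (Real.sqrt (2 * v + h ^ 2) ^ 2 - h ^ 2) / 2 = v
      rw [Real.sq_sqrt (by nlinarith)]; ring

lemma hderiv (a : ℝ) : ∀ x ∈ Ioi a,
    HasDerivWithinAt (fun x : ℝ => (x ^ 2 - h ^ 2) / 2) x (Ioi a) x := by
  intro x _
  have := ((hasDerivWithinAt_pow (s := Ioi a) 2 x).sub_const (h ^ 2)).div_const 2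
  simpa using this

lemma hinj {a : ℝ} (ha0 : 0 ≤ a) : InjOn (fun x : ℝ => (x ^ 2 - h ^ 2) / 2) (Ioi a) := by
  intro x hx y hy hxy
  have hx2 : x ^ 2 = y ^ 2 := by dsimp at hxy; linarith
  have hx0 : 0 ≤ x := le_trans ha0 (le_of_lt hx)
  have hy0 : 0 ≤ y := le_trans ha0 (le_of_lt hy)
  nlinarith

lemma pointwise_pdf (hg : 0 < g) {a x : ℝ} (ha0 : 0 ≤ a) (hx : x ∈ Ioi a) :
    |x| • (Real.exp (-(((x ^ 2 - h ^ 2) / 2 + h ^ 2 / 2) * g⁻¹)) /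
        (2 * Real.sqrt (π * g * ((x ^ 2 - h ^ 2) / 2 + h ^ 2 / 2))))
      = gaussianPDFReal 0 g.toNNReal x := by
  have hx0 : 0 < x := lt_of_le_of_lt ha0 hx
  have hgc : ((g.toNNReal : ℝ≥0) : ℝ) = g := Real.coe_toNNReal g hg.le
  rw [gaussianPDFReal]
  rw [hgc]
  have h1 : (x ^ 2 - h ^ 2) / 2 + h ^ 2 / 2 = x ^ 2 / 2 := by ring
  rw [h1]
  have h2 : Real.sqrt (π * g * (x ^ 2 / 2)) = Real.sqrt (π * g / 2) * x := by
    rw [show π * g * (x ^ 2 / 2) = (π * g / 2) * x ^ 2 by ring,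
      Real.sqrt_mul (by positivity), Real.sqrt_sq hx0.le]
  rw [h2, smul_eq_mul, abs_of_pos hx0]
  have h3 : Real.sqrt (2 * π * g) = 2 * Real.sqrt (π * g / 2) := by
    rw [show (2 * π * g : ℝ) = 4 * (π * g / 2) by ring, show (4:ℝ) = 2^2 by norm_num,
      Real.sqrt_mul (by positivity), Real.sqrt_sq (by norm_num)]
  rw [h3]
  have h4 : -(x ^ 2 / 2 * g⁻¹) = -(x - 0) ^ 2 / (2 * g) := by field_simp; ring
  rw [h4]
  have h5 : Real.sqrt (π * g / 2) ≠ 0 := ne_of_gt (Real.sqrt_pos.mpr (by positivity))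
  field_simp

lemma integral_W (hg : 0 < g) (hu : 0 ≤ u) :
    ∫ v in Ioi u, Real.exp (-((v + h ^ 2 / 2) * g⁻¹)) /
        (2 * Real.sqrt (π * g * (v + h ^ 2 / 2)))
      = ∫ x in Ioi (Real.sqrt (2 * u + h ^ 2)), gaussianPDFReal 0 g.toNNReal x := by
  have hh : 0 ≤ 2 * u + h ^ 2 := by positivity
  rw [← himg hh, integral_image_eq_integral_abs_deriv_smul measurableSet_Ioi
    (hderiv _) (hinj (Real.sqrt_nonneg _))]
  exact setIntegral_congr_fun measurableSet_Ioi
    (fun x hx => pointwise_pdf hg (Real.sqrt_nonneg _) hx)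

lemma integrableOn_W (hg : 0 < g) (hu : 0 ≤ u) :
    IntegrableOn (fun v => Real.exp (-((v + h ^ 2 / 2) * g⁻¹)) /
        (2 * Real.sqrt (π * g * (v + h ^ 2 / 2)))) (Ioi u) := by
  have hh : 0 ≤ 2 * u + h ^ 2 := by positivity
  rw [← himg hh, integrableOn_image_iff_integrableOn_abs_deriv_smul measurableSet_Ioi
    (hderiv _) (hinj (Real.sqrt_nonneg _))]
  exact ((integrable_gaussianPDFReal 0 g.toNNReal).integrableOn).congr_fun
    (fun x hx => (pointwise_pdf hg (Real.sqrt_nonneg _) hx).symm) measurableSet_Ioi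

variable {g h u : ℝ}

theorem key (hg : 0 < g) (hu : 0 ≤ u) :
    ∫⁻ t in Ioi g⁻¹, ENNReal.ofReal (Real.exp (-u * t) *
        (Real.exp (-(h ^ 2) * t / 2) / (2 * π * t * Real.sqrt (g * (t - g⁻¹)))))
      = gaussianReal 0 g.toNNReal (Ici (Real.sqrt (2 * u + h ^ 2))) := by
  have hc : (0:ℝ) < g⁻¹ := by positivity
  -- Step 1: pointwise identity
  have step1 : ∀ t ∈ Ioi g⁻¹,
      ENNReal.ofReal (Real.exp (-u * t) *
        (Real.exp (-(h ^ 2) * t / 2) / (2 * π * t * Real.sqrt (g * (t - g⁻¹)))))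
      = ∫⁻ v in Ioi u, ENNReal.ofReal
          (Real.exp (-((v + h ^ 2 / 2) * t)) / (2 * π * Real.sqrt (g * (t - g⁻¹)))) := by
    intro t ht
    have ht0 : 0 < t := lt_trans hc ht
    set K := Real.exp (-(h ^ 2 / 2 * t)) / (2 * π * Real.sqrt (g * (t - g⁻¹))) with hK
    have hK0 : 0 ≤ K := by positivity
    have hint : IntegrableOn (fun v => Real.exp (-(t * v)) * K) (Ioi u) := by
      simpa [neg_mul, IntegrableOn] using (exp_neg_integrableOn_Ioi u ht0).mul_const K
    have hcong : ∀ v ∈ Ioi u,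
        Real.exp (-((v + h ^ 2 / 2) * t)) / (2 * π * Real.sqrt (g * (t - g⁻¹)))
          = Real.exp (-(t * v)) * K := by
      intro v _
      rw [hK, show (-((v + h ^ 2 / 2) * t) : ℝ) = -(t * v) + -(h ^ 2 / 2 * t) by ring,
        Real.exp_add]
      ring
    rw [setLIntegral_congr_fun measurableSet_Ioi
        (fun v hv => congrArg ENNReal.ofReal (hcong v hv)),
      ← ofReal_integral_eq_lintegral_ofReal hint
        (Filter.Eventually.of_forall (fun v => by positivity)),
      MeasureTheory.integral_mul_const, integral_exp_neg_mul_Ioi' ht0 u]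
    congr 1
    rw [hK, show (-u * t : ℝ) = -(t * u) by ring,
      show (-(h ^ 2) * t / 2 : ℝ) = -(h ^ 2 / 2 * t) by ring]
    field_simp
  rw [setLIntegral_congr_fun measurableSet_Ioi step1]
  -- Step 2: swap
  have step2 :
      ∫⁻ t in Ioi g⁻¹, ∫⁻ v in Ioi u, ENNReal.ofReal
          (Real.exp (-((v + h ^ 2 / 2) * t)) / (2 * π * Real.sqrt (g * (t - g⁻¹))))
      = ∫⁻ v in Ioi u, ∫⁻ t in Ioi g⁻¹, ENNReal.ofReal
          (Real.exp (-((v + h ^ 2 / 2) * t)) / (2 * π * Real.sqrt (g * (t - g⁻¹)))) := by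
    apply lintegral_lintegral_swap
    apply Measurable.aemeasurable
    apply Measurable.ennreal_ofReal
    fun_prop
  rw [step2]
  -- Step 3: inner integral
  have step3 : ∀ v ∈ Ioi u,
      (∫⁻ t in Ioi g⁻¹, ENNReal.ofReal
          (Real.exp (-((v + h ^ 2 / 2) * t)) / (2 * π * Real.sqrt (g * (t - g⁻¹)))))
      = ENNReal.ofReal (Real.exp (-((v + h ^ 2 / 2) * g⁻¹)) /
          (2 * Real.sqrt (π * g * (v + h ^ 2 / 2)))) := by
    intro v hv
    have hv0 : 0 < v + h ^ 2 / 2 := by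
      have h1 : u < v := hv
      nlinarith [sq_nonneg h]
    rw [← ofReal_integral_eq_lintegral_ofReal (integrableOn_B hg hv0)
      (Filter.Eventually.of_forall (fun t => by positivity)),
      integral_B hg hv0]
  rw [setLIntegral_congr_fun measurableSet_Ioi step3,
    ← ofReal_integral_eq_lintegral_ofReal (integrableOn_W hg hu)
      (Filter.Eventually.of_forall (fun v => by positivity)),
    integral_W hg hu]
  rw [gaussianReal_apply_eq_integral 0 (Real.toNNReal_pos.mpr hg).ne' _,
    MeasureTheory.integral_Ici_eq_integral_Ioi]

theorem ext_of_exp (μ ν : Measure ℝ) [IsFiniteMeasure μ] [IsFiniteMeasure ν]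
    (hμ : μ (Iio 0) = 0) (hν : ν (Iio 0) = 0)
    (heq : ∀ n : ℕ, ∫ t, Real.exp (-(n : ℝ) * t) ∂μ = ∫ t, Real.exp (-(n : ℝ) * t) ∂ν) :
    μ = ν := by
  set f : ℝ → ℝ := fun t => Real.exp (-t) with hf
  have hfc : Continuous f := Real.continuous_exp.comp continuous_neg
  have hfinj : Function.Injective f := Real.exp_injective.comp neg_injective
  have hemb : MeasurableEmbedding f := hfc.measurableEmbedding hfinj
  have hμ'fin : IsFiniteMeasure (μ.map f) := ⟨by rw [hemb.map_apply]; exact measure_lt_top μ _⟩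
  have hν'fin : IsFiniteMeasure (ν.map f) := ⟨by rw [hemb.map_apply]; exact measure_lt_top ν _⟩
  -- both pushforwards are carried by [0,1]
  have hpre : f ⁻¹' (Icc (0:ℝ) 1)ᶜ ⊆ Iio 0 := by
    intro t ht
    simp only [mem_preimage, mem_compl_iff, mem_Icc, not_and_or, not_le] at ht
    rcases ht with h1 | h1
    · exact absurd h1 (not_lt.mpr (Real.exp_nonneg _))
    · simpa using Real.one_lt_exp_iff.mp h1
  have hcarμ : ∀ᵐ x ∂(μ.map f), x ∈ Icc (0:ℝ) 1 := by
    rw [ae_iff, hemb.map_apply]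
    exact measure_mono_null (fun t ht => hpre ht) hμ
  have hcarν : ∀ᵐ x ∂(ν.map f), x ∈ Icc (0:ℝ) 1 := by
    rw [ae_iff, hemb.map_apply]
    exact measure_mono_null (fun t ht => hpre ht) hν
  -- monomials are integrable
  have hxn : ∀ (ρ : Measure ℝ) [IsFiniteMeasure ρ], (∀ᵐ x ∂ρ, x ∈ Icc (0:ℝ) 1) →
      ∀ n : ℕ, Integrable (fun x : ℝ => x ^ n) ρ := by
    intro ρ _ hcar n
    refine Integrable.mono' (integrable_const 1) (continuous_pow n).aestronglyMeasurable
      (hcar.mono fun x hx => ?_)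
    rw [norm_pow, Real.norm_eq_abs, abs_of_nonneg hx.1]
    exact pow_le_one₀ hx.1 hx.2
  -- moments agree
  have hmom : ∀ n : ℕ, ∫ x, x ^ n ∂(μ.map f) = ∫ x, x ^ n ∂(ν.map f) := by
    intro n
    rw [integral_map hfc.measurable.aemeasurable (continuous_pow n).aestronglyMeasurable,
      integral_map hfc.measurable.aemeasurable (continuous_pow n).aestronglyMeasurable]
    simp only [hf]
    have harg : ∀ t : ℝ, Real.exp (-t) ^ n = Real.exp (-(n : ℝ) * t) := fun t => by
      rw [← Real.exp_nat_mul]; ring_nf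
    simp only [harg]
    exact heq n
  -- polynomials agree
  have hpoly : ∀ p : ℝ[X], ∫ x, p.eval x ∂(μ.map f) = ∫ x, p.eval x ∂(ν.map f) := by
    intro p
    have hev : ∀ x : ℝ, p.eval x
        = ∑ i ∈ Finset.range (p.natDegree + 1), p.coeff i * x ^ i := fun x =>
      eval_eq_sum_range x
    simp only [hev]
    rw [integral_finset_sum _ (fun i _ => (hxn _ hcarμ i).const_mul _),
      integral_finset_sum _ (fun i _ => (hxn _ hcarν i).const_mul _)]
    refine Finset.sum_congr rfl fun i _ => ?_
    rw [integral_const_mul, integral_const_mul, hmom i]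
  -- bounded continuous functions agree
  have hbc : ∀ (F : ℝ → ℝ), Continuous F → ∀ C : ℝ, (∀ x, |F x| ≤ C) →
      ∫ x, F x ∂(μ.map f) = ∫ x, F x ∂(ν.map f) := by
    intro F hFc C hbd
    have hC0 : 0 ≤ C := le_trans (abs_nonneg _) (hbd 0)
    have hIF : ∀ (ρ : Measure ℝ) [IsFiniteMeasure ρ], Integrable F ρ := fun ρ _ =>
      Integrable.mono' (integrable_const C) hFc.aestronglyMeasurable
        (Eventually.of_forall fun x => hbd x)
    set M := ((μ.map f) univ).toReal + ((ν.map f) univ).toReal with hM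
    have hM0 : 0 ≤ M := add_nonneg ENNReal.toReal_nonneg ENNReal.toReal_nonneg
    have hstep : ∀ ε : ℝ, 0 < ε →
        |∫ x, F x ∂(μ.map f) - ∫ x, F x ∂(ν.map f)| ≤ ε * M := by
      intro ε hε
      obtain ⟨p, hp⟩ := exists_polynomial_near_of_continuousOn 0 1 F hFc.continuousOn ε hε
      have hIp : ∀ (ρ : Measure ℝ) [IsFiniteMeasure ρ], (∀ᵐ x ∂ρ, x ∈ Icc (0:ℝ) 1) →
          Integrable (fun x => p.eval x) ρ := by
        intro ρ _ hcar
        refine Integrable.mono' (integrable_const (C + ε)) p.continuous.aestronglyMeasurable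
          (hcar.mono fun x hx => ?_)
        have h1 := hp x hx
        have h2 := hbd x
        rw [Real.norm_eq_abs]
        calc |p.eval x| = |(p.eval x - F x) + F x| := by ring_nf
          _ ≤ |p.eval x - F x| + |F x| := abs_add_le _ _
          _ ≤ C + ε := by linarith
      have hd : ∀ (ρ : Measure ℝ) [IsFiniteMeasure ρ], (∀ᵐ x ∂ρ, x ∈ Icc (0:ℝ) 1) →
          |∫ x, F x ∂ρ - ∫ x, p.eval x ∂ρ| ≤ ε * (ρ univ).toReal := by
        intro ρ _ hcar
        rw [← integral_sub (hIF ρ) (hIp ρ hcar)]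
        have := norm_integral_le_of_norm_le_const (μ := ρ)
          (f := fun x => F x - p.eval x) (C := ε) (hcar.mono fun x hx => by
            rw [Real.norm_eq_abs, abs_sub_comm]
            exact (hp x hx).le)
        rw [Real.norm_eq_abs] at this
        linarith [this, show ε * ρ.real univ = ε * (ρ univ).toReal from rfl]
      have h1 := hd (μ.map f) hcarμ
      have h2 := hd (ν.map f) hcarν
      have h3 := hpoly p
      calc |∫ x, F x ∂(μ.map f) - ∫ x, F x ∂(ν.map f)|
          = |(∫ x, F x ∂(μ.map f) - ∫ x, p.eval x ∂(μ.map f))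
              - (∫ x, F x ∂(ν.map f) - ∫ x, p.eval x ∂(ν.map f))| := by rw [← h3]; ring_nf
        _ ≤ |∫ x, F x ∂(μ.map f) - ∫ x, p.eval x ∂(μ.map f)|
              + |∫ x, F x ∂(ν.map f) - ∫ x, p.eval x ∂(ν.map f)| := abs_sub _ _
        _ ≤ ε * M := by rw [hM, mul_add]; exact add_le_add h1 h2
    by_contra hne
    have hpos : 0 < |∫ x, F x ∂(μ.map f) - ∫ x, F x ∂(ν.map f)| := by
      rw [abs_pos, sub_ne_zero]; exact hne
    set d := |∫ x, F x ∂(μ.map f) - ∫ x, F x ∂(ν.map f)| with hdd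
    have h4 := hstep (d / (2 * (M + 1))) (by positivity)
    have h5 : d / (2 * (M + 1)) * M = d * (M / (2 * (M + 1))) := by ring
    have h6 : M / (2 * (M + 1)) < 1 := by
      rw [div_lt_one (by linarith)]; linarith
    nlinarith
  -- conclude pushforwards equal
  have hkey : μ.map f = ν.map f := by
    refine ext_of_forall_lintegral_eq_of_IsFiniteMeasure fun f0 => ?_
    obtain ⟨C0, hC0⟩ := f0.bounded
    have hbd : ∀ x : ℝ, |((f0 x : ℝ≥0) : ℝ)| ≤ (f0 0 : ℝ≥0) + C0 := by
      intro x
      have := hC0 x 0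
      rw [NNReal.dist_eq] at this
      rw [abs_of_nonneg (f0 x).coe_nonneg]
      have h1 : ((f0 x : ℝ≥0) : ℝ) - ((f0 0 : ℝ≥0) : ℝ) ≤ |((f0 x : ℝ≥0) : ℝ) - ((f0 0 : ℝ≥0) : ℝ)| :=
        le_abs_self _
      linarith
    have hFc : Continuous fun x : ℝ => ((f0 x : ℝ≥0) : ℝ) :=
      NNReal.continuous_coe.comp f0.continuous
    have hint : ∀ (ρ : Measure ℝ) [IsFiniteMeasure ρ],
        Integrable (fun x : ℝ => ((f0 x : ℝ≥0) : ℝ)) ρ := fun ρ _ =>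
      Integrable.mono' (integrable_const _) hFc.aestronglyMeasurable
        (Eventually.of_forall fun x => hbd x)
    rw [lintegral_coe_eq_integral _ (hint (μ.map f)), lintegral_coe_eq_integral _ (hint (ν.map f)),
      hbc _ hFc _ hbd]
  -- transfer back
  ext s hs
  have h1 : μ s = (μ.map f) (f '' s) := by rw [hemb.map_apply, hfinj.preimage_image]
  have h2 : ν s = (ν.map f) (f '' s) := by rw [hemb.map_apply, hfinj.preimage_image]
  rw [h1, h2, hkey]

lemma integrable_exp_neg {ρ : Measure ℝ} [IsFiniteMeasure ρ] (hρ : ρ (Iio 0) = 0)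
    {u : ℝ} (hu : 0 ≤ u) : Integrable (fun t => Real.exp (-u * t)) ρ := by
  have hae : ∀ᵐ t ∂ρ, 0 ≤ t := by
    rw [ae_iff]
    convert hρ using 2
    ext t
    simp [not_le]
  refine Integrable.mono' (integrable_const 1) ((Real.continuous_exp.comp (continuous_const.mul continuous_id)).aestronglyMeasurable) (hae.mono fun t ht => ?_)
  rw [Real.norm_eq_abs, abs_of_pos (Real.exp_pos _)]
  rw [Real.exp_le_one_iff]
  nlinarith

theorem main_result (g h : ℝ) (hg : 0 < g)
    (μ : Measure ℝ) [IsFiniteMeasure μ]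
    (hneg : μ (Set.Iio 0) = 0)
    (hlaplace : ∀ u : ℝ, 0 ≤ u →
      ∫ t, Real.exp (-u * t) ∂μ =
        (gaussianReal 0 g.toNNReal (Set.Ici (Real.sqrt (2 * u + h ^ 2)))).toReal) :
    μ = MeasureTheory.volume.withDensity (fun t =>
      ENNReal.ofReal
        (if g⁻¹ < t then Real.exp (-(h ^ 2) * t / 2) / (2 * π * t * Real.sqrt (g * (t - g⁻¹)))
          else 0)) := by
  have hc : (0:ℝ) < g⁻¹ := by positivity
  set ρfn : ℝ → ℝ≥0∞ := fun t =>
    ENNReal.ofReal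
      (if g⁻¹ < t then Real.exp (-(h ^ 2) * t / 2) / (2 * π * t * Real.sqrt (g * (t - g⁻¹)))
        else 0) with hρfn
  have hmeasρ : Measurable ρfn := by
    apply Measurable.ennreal_ofReal
    apply Measurable.ite (measurableSet_Ioi (a := g⁻¹))
    · fun_prop
    · exact measurable_const
  set ν := MeasureTheory.volume.withDensity ρfn with hν
  -- Laplace transform of ν
  have hν_lap : ∀ u : ℝ, 0 ≤ u → ∫⁻ t, ENNReal.ofReal (Real.exp (-u * t)) ∂ν
      = gaussianReal 0 g.toNNReal (Ici (Real.sqrt (2 * u + h ^ 2))) := by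
    intro u hu
    rw [hν, lintegral_withDensity_eq_lintegral_mul _ hmeasρ (by fun_prop)]
    have hpt : ∀ t : ℝ, (ρfn * fun t => ENNReal.ofReal (Real.exp (-u * t))) t
        = (Ioi g⁻¹).indicator (fun t => ENNReal.ofReal (Real.exp (-u * t) *
            (Real.exp (-(h ^ 2) * t / 2) / (2 * π * t * Real.sqrt (g * (t - g⁻¹)))))) t := by
      intro t
      simp only [Pi.mul_apply, hρfn, indicator_apply, mem_Ioi]
      by_cases hct : g⁻¹ < t
      · rw [if_pos hct, if_pos hct, ENNReal.ofReal_mul (Real.exp_nonneg _), mul_comm]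
      · rw [if_neg hct, if_neg hct, ENNReal.ofReal_zero, zero_mul]
    rw [lintegral_congr hpt, lintegral_indicator measurableSet_Ioi]
    exact LaplaceAuxLemmas.key hg hu
  -- ν is finite
  have hνfin : IsFiniteMeasure ν := by
    constructor
    have h0 := hν_lap 0 le_rfl
    simp only [neg_zero, zero_mul, Real.exp_zero, ENNReal.ofReal_one, lintegral_one] at h0
    rw [h0]
    exact measure_lt_top _ _
  -- ν gives no mass to negatives
  have hνneg : ν (Iio 0) = 0 := by
    rw [hν, withDensity_apply _ measurableSet_Iio]
    have : ∀ t ∈ Iio (0:ℝ), ρfn t = (fun _ => (0:ℝ≥0∞)) t := by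
      intro t ht
      simp only [hρfn]
      rw [if_neg (by simp only [mem_Iio] at ht; linarith), ENNReal.ofReal_zero]
    rw [setLIntegral_congr_fun measurableSet_Iio this]
    simp
  -- real Laplace transform of ν
  have hν_real : ∀ u : ℝ, 0 ≤ u → ∫ t, Real.exp (-u * t) ∂ν
      = (gaussianReal 0 g.toNNReal (Ici (Real.sqrt (2 * u + h ^ 2)))).toReal := by
    intro u hu
    have h1 : ENNReal.ofReal (∫ t, Real.exp (-u * t) ∂ν)
        = gaussianReal 0 g.toNNReal (Ici (Real.sqrt (2 * u + h ^ 2))) := by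
      rw [ofReal_integral_eq_lintegral_ofReal (integrable_exp_neg hνneg hu)
        (Eventually.of_forall fun t => Real.exp_nonneg _)]
      exact hν_lap u hu
    rw [← h1, ENNReal.toReal_ofReal (integral_nonneg fun t => Real.exp_nonneg _)]
  exact LaplaceAuxLemmas.ext_of_exp μ ν hneg hνneg fun n => by
    rw [hlaplace (n : ℝ) (Nat.cast_nonneg n), hν_real (n : ℝ) (Nat.cast_nonneg n)]


end LaplaceAuxLemmas

/-- The Laplace transform appearing in the identity (Law_h) of the paper characterizes the
law: a finite Borel measure `μ` on `ℝ` carried by `[0,∞)` whose Laplace transform equals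
`u ↦ N(0,g)([√(2u + h²), ∞))` must be the measure with density `ρ_h` with respect to
Lebesgue measure, where `ρ_h(t) = exp(−h² t/2)/(2π t √(g (t − g⁻¹)))` for `t > g⁻¹`
and `ρ_h(t) = 0` otherwise. -/
theorem measure_eq_withDensity_of_laplace (g h : ℝ) (hg : 0 < g)
    (μ : Measure ℝ) [IsFiniteMeasure μ]
    (hneg : μ (Set.Iio 0) = 0)
    (hlaplace : ∀ u : ℝ, 0 ≤ u →
      ∫ t, Real.exp (-u * t) ∂μ =
        (gaussianReal 0 g.toNNReal (Set.Ici (Real.sqrt (2 * u + h ^ 2)))).toReal) :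
    μ = MeasureTheory.volume.withDensity (fun t =>
      ENNReal.ofReal
        (if g⁻¹ < t then Real.exp (-(h ^ 2) * t / 2) / (2 * π * t * Real.sqrt (g * (t - g⁻¹)))
          else 0)) :=
  LaplaceAuxLemmas.main_result g h hg μ hneg hlaplace
end
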